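/- arXiv:2101.08756 — 3 statements merged into one kernel-verified Lean document; each statement's English description precedes it below -/
import Mathlib

section
/- For all ω-regular languages L₁, L₂ ⊆ Σ^ω, exactly one of the following holds: (1) (L₁, L₂) is DBW-separable; (2) there exists a DBW-sep-refuter for (L₁, L₂). -/
structure DetAuto (α : Type) where
  Q : Type
  [fin : Fintype Q]
  init : Q
  δ : Q → α → Q

attribute [instance] DetAuto.fin

/-- The run of a deterministic automaton on an infinite word. -/
def DetAuto.run {α : Type} (M : DetAuto α) (x : ℕ → α) : ℕ → M.Q
  | 0 => M.init
  | n + 1 => M.δ (M.run x n) (x n)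

/-- Parity acceptance: the maximal color occurring infinitely often in the run is odd. -/
def ParityAccept {α : Type} (M : DetAuto α) (c : M.Q → ℕ) (x : ℕ → α) : Prop :=
  ∃ m, Odd m ∧ (∃ᶠ n in Filter.atTop, c (M.run x n) = m) ∧
    ∀ m', (∃ᶠ n in Filter.atTop, c (M.run x n) = m') → m' ≤ m

/-- A language is ω-regular iff it is recognized by some deterministic parity automaton. -/
def OmegaRegular {α : Type} (L : Set (ℕ → α)) : Prop :=
  ∃ (M : DetAuto α) (c : M.Q → ℕ), ∀ x, x ∈ L ↔ ParityAccept M c x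

/-- A language is DBW-recognizable iff some deterministic Büchi automaton recognizes it. -/
def DBWRecognizable {α : Type} (L : Set (ℕ → α)) : Prop :=
  ∃ (M : DetAuto α) (acc : Set M.Q), ∀ x, x ∈ L ↔ ∃ᶠ n in Filter.atTop, M.run x n ∈ acc

/-- An (A/α)-transducer: reads letters of `A`, outputs letters of `α`. -/
structure Transducer (A α : Type) where
  S : Type
  [fin : Fintype S]
  init : S
  ρ : S → A → S
  τ : S → α

attribute [instance] Transducer.fin

def Transducer.run {A α : Type} (T : Transducer A α) (y : ℕ → A) : ℕ → T.S
  | 0 => T.init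
  | n + 1 => T.ρ (T.run y n) (y n)

/-- Output with environment initiation: output letter `j` is emitted at state `s_{j+1}`. -/
def Transducer.out {A α : Type} (T : Transducer A α) (y : ℕ → A) : ℕ → α :=
  fun j => T.τ (T.run y (j + 1))

/-- `(L₁, L₂)` is DBW-separable: some DBW-recognizable language contains `L₁` and is
disjoint from `L₂`. -/
def DBWSeparable {α : Type} (L₁ L₂ : Set (ℕ → α)) : Prop :=
  ∃ L : Set (ℕ → α), DBWRecognizable L ∧ L₁ ⊆ L ∧ L ∩ L₂ = ∅

/-- A DBW-sep-refuter for `(L₁, L₂)` (`true` = acc): for every input `y`, either the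
output is in `L₁` and `y` has finitely many acc's, or the output is in `L₂` and `y` has
infinitely many acc's. -/
def DBWSepRefuter {α : Type} (L₁ L₂ : Set (ℕ → α)) (R : Transducer Bool α) : Prop :=
  ∀ y : ℕ → Bool,
    (R.out y ∈ L₁ ∧ {j | y j = true}.Finite) ∨
    (R.out y ∈ L₂ ∧ ¬ {j | y j = true}.Finite)

open Filter

namespace PGame

def FreqEq (u : ℕ → ℕ) (m : ℕ) : Prop := ∃ᶠ n in Filter.atTop, u n = m

theorem freqEq_shift (u : ℕ → ℕ) (k m : ℕ) :
    FreqEq (fun n => u (n + k)) m ↔ FreqEq u m := by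
  constructor
  · intro h
    rw [FreqEq, frequently_atTop] at h ⊢
    intro N
    obtain ⟨n, hn, he⟩ := h N
    exact ⟨n + k, le_trans hn (Nat.le_add_right _ _), he⟩
  · intro h
    rw [FreqEq, frequently_atTop] at h ⊢
    intro N
    obtain ⟨n, hn, he⟩ := h (N + k)
    refine ⟨n - k, by omega, ?_⟩
    have hnk : n - k + k = n := by omega
    show u (n - k + k) = m
    rw [hnk]; exact he

theorem exists_maxFreq (u : ℕ → ℕ) (S : Finset ℕ) (hS : ∀ n, u n ∈ S) :
    ∃ m, FreqEq u m ∧ ∀ m', FreqEq u m' → m' ≤ m := by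
  classical
  have hfin : {m | FreqEq u m}.Finite := by
    apply Set.Finite.subset S.finite_toSet
    intro m hm
    obtain ⟨n, hn⟩ := hm.exists
    exact hn ▸ hS n
  have hne : {m | FreqEq u m}.Nonempty := by
    by_contra hc
    rw [Set.not_nonempty_iff_eq_empty, Set.eq_empty_iff_forall_notMem] at hc
    have hev : ∀ᶠ n in atTop, ∀ m ∈ S, u n ≠ m := by
      rw [eventually_all_finset]
      intro m _
      simpa [FreqEq] using Filter.not_frequently.mp (hc m)
    obtain ⟨n, hn⟩ := hev.exists
    exact hn (u n) (hS n) rfl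
  obtain ⟨m, hm, hmax⟩ := Set.Finite.exists_maximalFor id _ hfin hne
  refine ⟨m, hm, fun m' hm' => ?_⟩
  by_contra hlt
  push_neg at hlt
  have := hmax hm' (le_of_lt hlt)
  simp only [id] at this
  omega

theorem freqEq_parity_split (g : ℕ → ℕ) (m : ℕ) :
    FreqEq g m ↔ FreqEq (fun j => g (2 * j)) m ∨ FreqEq (fun j => g (2 * j + 1)) m := by
  constructor
  · intro h
    by_contra hc
    push_neg at hc
    obtain ⟨h1, h2⟩ := hc
    rw [FreqEq, not_frequently, eventually_atTop] at h1 h2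
    obtain ⟨J₁, hJ₁⟩ := h1
    obtain ⟨J₂, hJ₂⟩ := h2
    rw [FreqEq, frequently_atTop] at h
    obtain ⟨n, hn, he⟩ := h (2 * J₁ + 2 * J₂ + 2)
    rcases Nat.even_or_odd n with ⟨j, hj⟩ | ⟨j, hj⟩
    · exact hJ₁ j (by omega) (by show g (2 * j) = m; rw [show 2 * j = n by omega]; exact he)
    · exact hJ₂ j (by omega) (by show g (2 * j + 1) = m; rw [show 2 * j + 1 = n by omega]; exact he)
  · intro h
    rcases h with h | h <;> rw [FreqEq, frequently_atTop] at h ⊢ <;> intro N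
    · obtain ⟨j, hj, he⟩ := h N
      exact ⟨2 * j, by omega, he⟩
    · obtain ⟨j, hj, he⟩ := h N
      exact ⟨2 * j + 1, by omega, he⟩

section Games

variable {V : Type} (E : V → V → Prop) (own : V → Bool) (col : V → ℕ)

def WinsPlay (p : Bool) (π : ℕ → V) : Prop :=
  ∃ m, m % 2 = (cond p 1 0) ∧ FreqEq (fun n => col (π n)) m ∧
    ∀ m', FreqEq (fun n => col (π n)) m' → m' ≤ m

theorem winsPlay_shift (p : Bool) (π : ℕ → V) (k : ℕ) :
    WinsPlay col p (fun n => π (n + k)) ↔ WinsPlay col p π := by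
  unfold WinsPlay
  constructor <;> rintro ⟨m, h1, h2, h3⟩ <;> refine ⟨m, h1, ?_, ?_⟩
  · exact (freqEq_shift (fun n => col (π n)) k m).mp h2
  · intro m' hm'
    exact h3 m' ((freqEq_shift (fun n => col (π n)) k m').mpr hm')
  · exact (freqEq_shift (fun n => col (π n)) k m).mpr h2
  · intro m' hm'
    exact h3 m' ((freqEq_shift (fun n => col (π n)) k m').mp hm')

theorem not_winsPlay_both (π : ℕ → V) :
    WinsPlay col true π → WinsPlay col false π → False := by
  rintro ⟨m, h1, h2, h3⟩ ⟨m', h1', h2', h3'⟩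
  have e1 := h3 m' h2'
  have e2 := h3' m h2
  have : m = m' := le_antisymm e2 e1
  subst this
  simp at h1 h1'
  omega

theorem not_winsPlay_both' (π : ℕ → V) (p : Bool) :
    WinsPlay col p π → WinsPlay col (!p) π → False := by
  cases p
  · intro h1 h2; exact not_winsPlay_both col π (by simpa using h2) h1
  · intro h1 h2; exact not_winsPlay_both col π h1 (by simpa using h2)

theorem winsPlay_total [Fintype V] (π : ℕ → V) :
    WinsPlay col true π ∨ WinsPlay col false π := by
  classical
  obtain ⟨m, hm, hmax⟩ := exists_maxFreq (fun n => col (π n))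
    (Finset.univ.image col) (fun n => Finset.mem_image_of_mem col (Finset.mem_univ _))
  rcases Nat.mod_two_eq_zero_or_one m with h | h
  · exact Or.inr ⟨m, by simp [h], hm, hmax⟩
  · exact Or.inl ⟨m, by simp [h], hm, hmax⟩

def IsPlay (U : Set V) (π : ℕ → V) : Prop :=
  (∀ n, π n ∈ U) ∧ (∀ n, E (π n) (π (n + 1)))

def Consistent (p : Bool) (σ : V → V) (π : ℕ → V) : Prop :=
  ∀ n, own (π n) = p → π (n + 1) = σ (π n)

def Legal (U : Set V) (p : Bool) (σ : V → V) : Prop :=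
  ∀ v ∈ U, own v = p → E v (σ v) ∧ σ v ∈ U

def WinsFrom (U : Set V) (p : Bool) (σ : V → V) (v : V) : Prop :=
  ∀ π, IsPlay E U π → Consistent own p σ π → π 0 = v → WinsPlay col p π

theorem isPlay_shift {U : Set V} {π : ℕ → V} (h : IsPlay E U π) (k : ℕ) :
    IsPlay E U (fun n => π (n + k)) := by
  refine ⟨fun n => h.1 (n + k), fun n => ?_⟩
  show E (π (n + k)) (π (n + 1 + k))
  rw [show n + 1 + k = n + k + 1 by omega]
  exact h.2 (n + k)

theorem consistent_shift {p : Bool} {σ : V → V} {π : ℕ → V}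
    (h : Consistent own p σ π) (k : ℕ) :
    Consistent own p σ (fun n => π (n + k)) := by
  intro n hn
  show π (n + 1 + k) = σ (π (n + k))
  rw [show n + 1 + k = n + k + 1 by omega]
  exact h (n + k) hn

section Attractor

variable (U : Set V) (q : Bool) (T : Set V)

def attrN : ℕ → Set V
  | 0 => T
  | n + 1 => attrN n ∪ {v | v ∈ U ∧
      ((own v = q ∧ ∃ w ∈ attrN n, E v w) ∨
       (own v ≠ q ∧ ∀ w ∈ U, E v w → w ∈ attrN n))}

def Attr : Set V := ⋃ n, attrN E own U q T n

theorem attrN_mono : ∀ {i j : ℕ}, i ≤ j → attrN E own U q T i ⊆ attrN E own U q T j := by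
  intro i j hij
  induction j with
  | zero => rw [Nat.le_zero.mp hij]
  | succ j ihj =>
    rcases Nat.lt_or_ge i (j+1) with h | h
    · exact subset_trans (ihj (by omega)) (by intro v hv; exact Or.inl hv)
    · rw [Nat.le_antisymm hij h]

theorem subset_attr : T ⊆ Attr E own U q T :=
  fun v hv => Set.mem_iUnion.mpr ⟨0, hv⟩

theorem attr_subset (hT : T ⊆ U) : Attr E own U q T ⊆ U := by
  intro v hv
  obtain ⟨n, hn⟩ := Set.mem_iUnion.mp hv
  induction n with
  | zero => exact hT hn
  | succ n ihn => rcases hn with h | h; exact ihn h; exact h.1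

theorem mem_attr_own {v : V} (hv : v ∈ U) (ho : own v = q)
    (h : ∃ w ∈ Attr E own U q T, E v w) : v ∈ Attr E own U q T := by
  obtain ⟨w, hw, hE⟩ := h
  obtain ⟨n, hn⟩ := Set.mem_iUnion.mp hw
  exact Set.mem_iUnion.mpr ⟨n + 1, Or.inr ⟨hv, Or.inl ⟨ho, w, hn, hE⟩⟩⟩

theorem mem_attr_opp [Fintype V] {v : V} (hv : v ∈ U) (ho : own v ≠ q)
    (h : ∀ w ∈ U, E v w → w ∈ Attr E own U q T) : v ∈ Attr E own U q T := by
  classical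
  set f : V → ℕ := fun w => if hw : ∃ n, w ∈ attrN E own U q T n then Nat.find hw else 0 with hf
  set Nb := Finset.univ.sup f with hNb
  refine Set.mem_iUnion.mpr ⟨Nb + 1, Or.inr ⟨hv, Or.inr ⟨ho, fun w hw hE => ?_⟩⟩⟩
  have hmem := h w hw hE
  obtain ⟨n, hn⟩ := Set.mem_iUnion.mp hmem
  have hex : ∃ n, w ∈ attrN E own U q T n := ⟨n, hn⟩
  have h1 : w ∈ attrN E own U q T (f w) := by
    rw [hf]; simp only [hex, dif_pos]
    exact Nat.find_spec hex
  exact attrN_mono E own U q T (Finset.le_sup (Finset.mem_univ w)) h1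

theorem attr_step {v : V} {n : ℕ} (h1 : v ∈ attrN E own U q T (n+1))
    (h2 : v ∉ attrN E own U q T n) (ho : own v = q) :
    ∃ w, E v w ∧ w ∈ attrN E own U q T n := by
  rcases h1 with h | h
  · exact absurd h h2
  · rcases h.2 with ⟨_, w, hw, hE⟩ | ⟨hne, _⟩
    · exact ⟨w, hE, hw⟩
    · exact absurd ho hne

theorem attr_step_opp {v : V} {n : ℕ} (h1 : v ∈ attrN E own U q T (n+1))
    (h2 : v ∉ attrN E own U q T n) (ho : own v ≠ q) :
    ∀ w ∈ U, E v w → w ∈ attrN E own U q T n := by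
  rcases h1 with h | h
  · exact absurd h h2
  · rcases h.2 with ⟨heq, _⟩ | ⟨_, h'⟩
    · exact absurd heq ho
    · exact h'

attribute [local instance] Classical.propDecidable

noncomputable def attrStrat : V → V := fun v =>
  if h : ∃ n, v ∈ attrN E own U q T (n+1) ∧ v ∉ attrN E own U q T n ∧ own v = q then
    (attr_step E own U q T (Nat.find_spec h).1 (Nat.find_spec h).2.1
      (Nat.find_spec h).2.2).choose
  else v

theorem attrStrat_spec {v : V} {n : ℕ} (h1 : v ∈ attrN E own U q T (n+1))
    (h2 : v ∉ attrN E own U q T n) (ho : own v = q) :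
    E v (attrStrat E own U q T v) ∧ attrStrat E own U q T v ∈ attrN E own U q T n := by
  have hex : ∃ m, v ∈ attrN E own U q T (m+1) ∧ v ∉ attrN E own U q T m ∧ own v = q :=
    ⟨n, h1, h2, ho⟩
  have hle : Nat.find hex ≤ n := Nat.find_le ⟨h1, h2, ho⟩
  have hsp := (attr_step E own U q T (Nat.find_spec hex).1 (Nat.find_spec hex).2.1
    (Nat.find_spec hex).2.2).choose_spec
  rw [attrStrat, dif_pos hex]
  exact ⟨hsp.1, attrN_mono E own U q T hle hsp.2⟩

end Attractor

theorem attr_forcing (U : Set V) (q : Bool) (T : Set V) (σ : V → V)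
    (hσ : ∀ n v, v ∈ attrN E own U q T (n+1) → v ∉ attrN E own U q T n → own v = q →
      σ v ∈ attrN E own U q T n)
    : ∀ n (π : ℕ → V), IsPlay E U π → Consistent own q σ π →
      π 0 ∈ attrN E own U q T n → ∃ k, π k ∈ T := by
  intro n
  induction n with
  | zero => exact fun π _ _ h0 => ⟨0, h0⟩
  | succ n ih =>
    intro π hplay hcons h0
    by_cases hin : π 0 ∈ attrN E own U q T n
    · exact ih π hplay hcons hin
    · have h1 : π 1 ∈ attrN E own U q T n := by
        by_cases ho : own (π 0) = q
        · rw [hcons 0 ho]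
          exact hσ n (π 0) h0 hin ho
        · exact attr_step_opp E own U q T h0 hin ho (π 1) (hplay.1 1) (hplay.2 0)
      obtain ⟨k, hk⟩ := ih (fun m => π (m + 1)) (isPlay_shift E hplay 1)
        (consistent_shift own hcons 1) h1
      exact ⟨k + 1, hk⟩

attribute [local instance] Classical.propDecidable

theorem bool_resolve {α : Type} (W : Bool → Set α) (p : Bool) (h : W (!p) = ∅) (v : α)
    (hv : v ∈ W true ∨ v ∈ W false) : v ∈ W p := by
  cases p <;> simp_all

theorem bool_cover {α : Type} (W : Bool → Set α) (p : Bool) (v : α)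
    (hv : v ∈ W true ∨ v ∈ W false) : v ∈ W p ∨ v ∈ W (!p) := by
  cases p
  · exact hv.symm
  · exact hv

theorem bool_cover2 {α : Type} (W : Bool → Set α) (p : Bool) (v : α)
    (hv : v ∈ W p ∨ v ∈ W (!p)) : v ∈ W true ∨ v ∈ W false := by
  cases p
  · exact hv.symm
  · exact hv

noncomputable def dfltMove (U : Set V) : V → V := fun v =>
  if h : ∃ w, w ∈ U ∧ E v w then h.choose else v

theorem dfltMove_spec {U : Set V} (hU : ∀ v ∈ U, ∃ w, w ∈ U ∧ E v w) {v : V} (hv : v ∈ U) :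
    E v (dfltMove E U v) ∧ dfltMove E U v ∈ U := by
  have h : ∃ w, w ∈ U ∧ E v w := hU v hv
  rw [dfltMove, dif_pos h]
  exact ⟨h.choose_spec.2, h.choose_spec.1⟩

theorem determinacy [Fintype V] :
    ∀ (n : ℕ) (U : Set V), (∀ v ∈ U, ∃ w, w ∈ U ∧ E v w) → U.ncard ≤ n →
    ∃ (W : Bool → Set V) (σ : Bool → V → V),
      (∀ p, W p ⊆ U) ∧
      (∀ v ∈ U, v ∈ W true ∨ v ∈ W false) ∧
      (∀ p, Legal E own U p (σ p)) ∧
      (∀ p, ∀ v ∈ W p, WinsFrom E own col U p (σ p) v) := by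
  intro n
  induction n with
  | zero =>
    intro U hU hcard
    have hUe : U = ∅ := by
      rw [← Set.ncard_eq_zero (Set.toFinite U)]; omega
    subst hUe
    exact ⟨fun _ => ∅, fun _ v => v, by simp, by simp,
      fun p v hv => absurd hv (Set.notMem_empty v),
      fun p v hv => absurd hv (Set.notMem_empty v)⟩
  | succ n ih =>
    intro U hU hcard
    classical
    by_cases hUe : U = ∅
    · subst hUe
      exact ⟨fun _ => ∅, fun _ v => v, by simp, by simp,
        fun p v hv => absurd hv (Set.notMem_empty v),
        fun p v hv => absurd hv (Set.notMem_empty v)⟩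
    have hUne : U.Nonempty := Set.nonempty_iff_ne_empty.mpr hUe
    have hUfin : U.Finite := Set.toFinite U
    have hFne : hUfin.toFinset.Nonempty := by rwa [Set.Finite.toFinset_nonempty]
    set d := (hUfin.toFinset.image col).max' (hFne.image col) with hd
    have hd_le : ∀ v ∈ U, col v ≤ d := by
      intro v hv
      exact Finset.le_max' _ _
        (Finset.mem_image_of_mem col ((Set.Finite.mem_toFinset hUfin).mpr hv))
    have hd_mem : ∃ v ∈ U, col v = d := by
      have := (hUfin.toFinset.image col).max'_mem (hFne.image col)
      rw [Finset.mem_image] at this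
      obtain ⟨v, hv, he⟩ := this
      exact ⟨v, (Set.Finite.mem_toFinset hUfin).mp hv, he⟩
    set p : Bool := decide (d % 2 = 1) with hp
    have hpar : d % 2 = cond p 1 0 := by
      rcases Nat.mod_two_eq_zero_or_one d with h | h <;> simp [hp, h]
    set N : Set V := {v | v ∈ U ∧ col v = d} with hN
    have hN_sub : N ⊆ U := fun v hv => hv.1
    have hN_ne : N.Nonempty := by obtain ⟨v, hv, he⟩ := hd_mem; exact ⟨v, hv, he⟩
    set A := Attr E own U p N with hA
    have hA_sub : A ⊆ U := attr_subset E own U p N hN_sub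
    have hA_ne : A.Nonempty := hN_ne.mono (subset_attr E own U p N)
    set U' := U \ A with hU'
    have hU'_noesc : ∀ v ∈ U', own v = p → ∀ w ∈ U, E v w → w ∈ U' := by
      intro v hv ho w hw hE
      exact ⟨hw, fun hwA => hv.2 (mem_attr_own E own U p N hv.1 ho ⟨w, hwA, hE⟩)⟩
    have hU'_total : ∀ v ∈ U', ∃ w, w ∈ U' ∧ E v w := by
      intro v hv
      by_cases ho : own v = p
      · obtain ⟨w, hw, hE⟩ := hU v hv.1
        exact ⟨w, hU'_noesc v hv ho w hw hE, hE⟩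
      · by_contra hc
        push_neg at hc
        apply hv.2
        apply mem_attr_opp E own U p N hv.1 ho
        intro w hw hE
        by_contra hwA
        exact (hc w ⟨hw, hwA⟩) hE
    have hcard' : U'.ncard ≤ n := by
      have hss : U' ⊂ U := by
        constructor
        · exact Set.diff_subset
        · intro hsub
          obtain ⟨a, ha⟩ := hA_ne
          exact (hsub (hA_sub ha)).2 ha
      have := Set.ncard_lt_ncard hss hUfin
      omega
    obtain ⟨W', σ', hW'sub, hW'cov, hW'leg, hW'win⟩ := ih U' hU'_total hcard'
    -- attractor strategy facts for A
    have hAstep : ∀ v ∈ A, v ∉ N → own v = p →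
        E v (attrStrat E own U p N v) ∧ attrStrat E own U p N v ∈ A := by
      intro v hvA hvN ho
      obtain ⟨m, hm⟩ := Set.mem_iUnion.mp hvA
      have hex : ∃ k, v ∈ attrN E own U p N k := ⟨m, hm⟩
      set k₀ := Nat.find hex with hk₀
      have hk₀spec := Nat.find_spec hex
      have hk₀pos : k₀ ≠ 0 := by
        intro h0
        rw [hk₀] at h0
        have : v ∈ attrN E own U p N 0 := by rw [← h0]; exact hk₀spec
        exact hvN this
      obtain ⟨k, hk⟩ := Nat.exists_eq_succ_of_ne_zero hk₀pos
      have h1 : v ∈ attrN E own U p N (k+1) := by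
        rw [show k + 1 = k₀ from by omega]; exact hk₀spec
      have h2 : v ∉ attrN E own U p N k := Nat.find_min hex (by omega)
      have := attrStrat_spec E own U p N h1 h2 ho
      exact ⟨this.1, Set.mem_iUnion.mpr ⟨k, this.2⟩⟩
    have hrp : ∀ r : Bool, r = p ∨ r = !p := by intro r; cases r <;> cases p <;> simp
    by_cases hcase : W' (!p) = ∅
    · -- CASE 1 : p wins everywhere on U
      have hcov' : ∀ v ∈ U', v ∈ W' p := fun v hv =>
        bool_resolve W' p hcase v (hW'cov v hv)
      set σA := attrStrat E own U p N with hσA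
      set σP : V → V := fun v => if v ∈ U' then σ' p v else
        if v ∈ A ∧ v ∉ N then σA v else dfltMove E U v with hσP
      have hσP_legal : Legal E own U p σP := by
        intro v hv ho
        by_cases h1 : v ∈ U'
        · have := hW'leg p v h1 ho
          simp only [hσP, if_pos h1]
          exact ⟨this.1, (this.2).1⟩
        · by_cases h2 : v ∈ A ∧ v ∉ N
          · have := hAstep v h2.1 h2.2 ho
            simp only [hσP, if_neg h1, if_pos h2]
            exact ⟨this.1, hA_sub this.2⟩
          · simp only [hσP, if_neg h1, if_neg h2]
            exact dfltMove_spec E hU hv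
      set Ws : Bool → Set V := fun r => if r = p then U else ∅ with hWs
      set σs : Bool → V → V := fun r => if r = p then σP else dfltMove E U with hσs
      have hWsp : Ws p = U := if_pos rfl
      have hWsnp : Ws (!p) = ∅ := if_neg (by cases p <;> simp)
      have hσsp : σs p = σP := if_pos rfl
      have hσsnp : σs (!p) = dfltMove E U := if_neg (by cases p <;> simp)
      refine ⟨Ws, σs, ?_, ?_, ?_, ?_⟩
      · intro r
        rcases hrp r with h | h <;> rw [h]
        · rw [hWsp]
        · rw [hWsnp]; exact Set.empty_subset U
      · intro v hv
        by_cases hpt : p = true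
        · left; rw [← hpt, hWsp]; exact hv
        · have hpf : p = false := by
            rcases Bool.eq_false_or_eq_true p with h | h
            · exact absurd h hpt
            · exact h
          right; rw [← hpf, hWsp]; exact hv
      · intro r
        rcases hrp r with h | h <;> rw [h]
        · rw [hσsp]; exact hσP_legal
        · rw [hσsnp]
          intro v hv ho
          exact dfltMove_spec E hU hv
      · intro r v hv
        rcases hrp r with hr | hr
        · subst hr
          rw [hWsp] at hv
          rw [hσsp]
          intro π hplay hcons h0
          by_cases hfreq : ∃ᶠ k in atTop, π k ∈ N
          · refine ⟨d, hpar, ?_, ?_⟩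
            · exact hfreq.mono (fun k hk => hk.2)
            · intro m' hm'
              obtain ⟨k, hk⟩ := hm'.exists
              exact hk ▸ hd_le (π k) (hplay.1 k)
          · rw [not_frequently] at hfreq
            obtain ⟨t₀, ht₀⟩ := eventually_atTop.mp hfreq
            have hσforce : ∀ m v, v ∈ attrN E own U p N (m+1) → v ∉ attrN E own U p N m →
                own v = p → σP v ∈ attrN E own U p N m := by
              intro m v h1 h2 ho
              have hvA : v ∈ A := Set.mem_iUnion.mpr ⟨m+1, h1⟩
              have hvN : v ∉ N := fun hn =>
                h2 (attrN_mono E own U p N (Nat.zero_le m) hn)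
              have hvU' : v ∉ U' := fun h => h.2 hvA
              simp only [hσP, if_neg hvU', if_pos (⟨hvA, hvN⟩ : v ∈ A ∧ v ∉ N)]
              exact (attrStrat_spec E own U p N h1 h2 ho).2
            have htail : ∀ t, t ≥ t₀ → π t ∉ A := by
              intro t ht hA'
              obtain ⟨m, hm⟩ := Set.mem_iUnion.mp hA'
              obtain ⟨k, hk⟩ := attr_forcing E own U p N σP hσforce m (fun j => π (j + t))
                (isPlay_shift E hplay t) (consistent_shift own hcons t)
                (by show π (0 + t) ∈ attrN E own U p N m; rw [Nat.zero_add]; exact hm)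
              exact ht₀ (k + t) (by omega) hk
            have htail' : ∀ t, t ≥ t₀ → π t ∈ U' := fun t ht => ⟨hplay.1 t, htail t ht⟩
            have hwin := hW'win p (π t₀) (hcov' (π t₀) (htail' t₀ le_rfl))
              (fun k => π (k + t₀))
              ⟨fun k => htail' (k + t₀) (by omega), (isPlay_shift E hplay t₀).2⟩
              (fun k hk => by
                have h2 : π (k + t₀) ∈ U' := htail' (k + t₀) (by omega)
                show π (k + 1 + t₀) = σ' p (π (k + t₀))
                rw [show k + 1 + t₀ = k + t₀ + 1 by omega]
                rw [hcons (k + t₀) hk]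
                simp only [hσP, if_pos h2])
              (by show π (0 + t₀) = π t₀; rw [Nat.zero_add])
            exact (winsPlay_shift col p π t₀).mp hwin
        · subst hr
          rw [hWsnp] at hv
          exact absurd hv (Set.notMem_empty v)
    · -- CASE 2
      have hW'ne : (W' (!p)).Nonempty := Set.nonempty_iff_ne_empty.mpr hcase
      set χ : V → V := fun w => if own w = p then σ' p w else σ' (!p) w with hχ
      have hχstep : ∀ w ∈ U', E w (χ w) ∧ χ w ∈ U' := by
        intro w hw
        by_cases ho : own w = p
        · have := hW'leg p w hw ho
          simp only [hχ, if_pos ho]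
          exact ⟨this.1, this.2⟩
        · have ho' : own w = !p := by
            rcases hrp (own w) with h | h
            · exact absurd h ho
            · exact h
          have := hW'leg (!p) w hw ho'
          simp only [hχ, if_neg ho]
          exact ⟨this.1, this.2⟩
      have hχp : ∀ w, own w = p → χ w = σ' p w := fun w ho => by
        simp only [hχ, if_pos ho]
      have hχnp : ∀ w, own w ≠ p → χ w = σ' (!p) w := fun w ho => by
        simp only [hχ, if_neg ho]
      -- trap lemma
      have hkey : ∀ v ∈ W' (!p), ∀ u ∈ U', E v u → (own v = p ∨ u = σ' (!p) v) →
          u ∈ W' (!p) := by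
        intro v hv u hu hE hdisj
        by_contra hc
        have huP : u ∈ W' p := by
          rcases bool_cover W' p u (hW'cov u hu) with h | h
          · exact h
          · exact absurd h hc
        set g : ℕ → V := fun n => χ^[n] u with hg
        have hg0 : g 0 = u := rfl
        have hgs : ∀ k, g (k+1) = χ (g k) := fun k => Function.iterate_succ_apply' χ k u
        have hgU : ∀ k, g k ∈ U' := by
          intro k; induction k with
          | zero => exact hu
          | succ k ihk => rw [hgs k]; exact (hχstep (g k) ihk).2
        set π : ℕ → V := fun n => Nat.rec v (fun k _ => g k) n with hπ
        have hπ0 : π 0 = v := rfl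
        have hπs : ∀ n, π (n+1) = g n := fun n => rfl
        have hπU : ∀ n, π n ∈ U' := by
          intro n
          cases n with
          | zero => exact hW'sub (!p) hv
          | succ k => rw [hπs]; exact hgU _
        have hπE : ∀ n, E (π n) (π (n+1)) := by
          intro n
          cases n with
          | zero => rw [hπ0, hπs, hg0]; exact hE
          | succ k => rw [hπs (k+1), hgs k, hπs k]; exact (hχstep (g k) (hgU k)).1
        have hplayπ : IsPlay E U' π := ⟨hπU, hπE⟩
        have hconsnp : Consistent own (!p) (σ' (!p)) π := by
          intro n ho
          cases n with
          | zero =>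
            rw [hπ0] at ho
            rw [hπs, hg0, hπ0]
            rcases hdisj with h | h
            · rw [h] at ho
              exact absurd ho (by cases p <;> simp)
            · exact h
          | succ k =>
            rw [hπs (k+1), hgs k, hπs k]
            rw [hπs k] at ho
            apply hχnp
            rw [ho]; cases p <;> simp
        have hwnp := hW'win (!p) v hv π hplayπ hconsnp hπ0
        have hconsp : Consistent own p (σ' p) (fun n => π (n+1)) := by
          intro n ho
          show π (n+1+1) = σ' p (π (n+1))
          rw [hπs (n+1), hgs n, hπs n]
          have ho2 : own (π (n+1)) = p := ho
          rw [hπs n] at ho2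
          exact hχp (g n) ho2
        have hwp := hW'win p u huP (fun n => π (n+1)) (isPlay_shift E hplayπ 1) hconsp rfl
        exact not_winsPlay_both' col π p ((winsPlay_shift col p π 1).mp hwp) hwnp
      -- attractor to the opponent region
      set B := Attr E own U (!p) (W' (!p)) with hB
      have hW'subU : W' (!p) ⊆ U := fun w hw => (hW'sub (!p) hw).1
      have hB_sub : B ⊆ U := attr_subset E own U (!p) _ hW'subU
      have hB_ne : B.Nonempty := hW'ne.mono (subset_attr E own U (!p) _)
      set U'' := U \ B with hU''
      have hU''_noesc : ∀ v ∈ U'', own v = !p → ∀ w ∈ U, E v w → w ∈ U'' := by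
        intro v hv ho w hw hE
        exact ⟨hw, fun hwB => hv.2 (mem_attr_own E own U (!p) _ hv.1 ho ⟨w, hwB, hE⟩)⟩
      have hU''_total : ∀ v ∈ U'', ∃ w, w ∈ U'' ∧ E v w := by
        intro v hv
        by_cases ho : own v = !p
        · obtain ⟨w, hw, hE⟩ := hU v hv.1
          exact ⟨w, hU''_noesc v hv ho w hw hE, hE⟩
        · by_contra hc
          push_neg at hc
          apply hv.2
          apply mem_attr_opp E own U (!p) _ hv.1 ho
          intro w hw hE
          by_contra hwB
          exact (hc w ⟨hw, hwB⟩) hE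
      have hcard'' : U''.ncard ≤ n := by
        have hss : U'' ⊂ U := by
          constructor
          · exact Set.diff_subset
          · intro hsub
            obtain ⟨a, ha⟩ := hB_ne
            exact (hsub (hB_sub ha)).2 ha
        have := Set.ncard_lt_ncard hss hUfin
        omega
      obtain ⟨W'', σ'', hW''sub, hW''cov, hW''leg, hW''win⟩ := ih U'' hU''_total hcard''
      set σB := attrStrat E own U (!p) (W' (!p)) with hσB
      set σOpp : V → V := fun w =>
        if w ∈ W' (!p) then σ' (!p) w else
        if w ∈ B then σB w else
        if w ∈ U'' then σ'' (!p) w else dfltMove E U w with hσOpp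
      set σPl : V → V := fun w => if w ∈ U'' then σ'' p w else dfltMove E U w with hσPl
      set Ws : Bool → Set V := fun r => if r = p then W'' p else B ∪ W'' (!p) with hWs
      set σs : Bool → V → V := fun r => if r = p then σPl else σOpp with hσs
      have hWsp : Ws p = W'' p := if_pos rfl
      have hWsnp : Ws (!p) = B ∪ W'' (!p) := if_neg (by cases p <;> simp)
      have hσsp : σs p = σPl := if_pos rfl
      have hσsnp : σs (!p) = σOpp := if_neg (by cases p <;> simp)
      -- attractor strategy facts for B
      have hBstep : ∀ v ∈ B, v ∉ W' (!p) → own v = !p → E v (σB v) ∧ σB v ∈ B := by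
        intro v hvB hvW ho
        obtain ⟨m, hm⟩ := Set.mem_iUnion.mp hvB
        have hex : ∃ k, v ∈ attrN E own U (!p) (W' (!p)) k := ⟨m, hm⟩
        have hk₀spec := Nat.find_spec hex
        have hk₀pos : Nat.find hex ≠ 0 := by
          intro h0
          have : v ∈ attrN E own U (!p) (W' (!p)) 0 := by rw [← h0]; exact hk₀spec
          exact hvW this
        obtain ⟨k, hk⟩ := Nat.exists_eq_succ_of_ne_zero hk₀pos
        have h1 : v ∈ attrN E own U (!p) (W' (!p)) (k+1) := by
          rw [show k + 1 = Nat.find hex from by omega]; exact hk₀spec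
        have h2 : v ∉ attrN E own U (!p) (W' (!p)) k := Nat.find_min hex (by omega)
        have := attrStrat_spec E own U (!p) (W' (!p)) h1 h2 ho
        exact ⟨this.1, Set.mem_iUnion.mpr ⟨k, this.2⟩⟩
      refine ⟨Ws, σs, ?_, ?_, ?_, ?_⟩
      · intro r
        rcases hrp r with h | h <;> rw [h]
        · rw [hWsp]
          exact subset_trans (hW''sub p) Set.diff_subset
        · rw [hWsnp]
          apply Set.union_subset hB_sub
          exact subset_trans (hW''sub (!p)) Set.diff_subset
      · intro v hv
        apply bool_cover2 Ws p
        by_cases hvB : v ∈ B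
        · right; rw [hWsnp]; exact Or.inl hvB
        · rcases bool_cover W'' p v (hW''cov v ⟨hv, hvB⟩) with h | h
          · left; rw [hWsp]; exact h
          · right; rw [hWsnp]; exact Or.inr h
      · intro r
        rcases hrp r with h | h <;> rw [h]
        · rw [hσsp]
          intro v hv ho
          by_cases h1 : v ∈ U''
          · have := hW''leg p v h1 ho
            simp only [hσPl, if_pos h1]
            exact ⟨this.1, this.2.1⟩
          · simp only [hσPl, if_neg h1]
            exact dfltMove_spec E hU hv
        · rw [hσsnp]
          intro v hv ho
          by_cases h1 : v ∈ W' (!p)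
          · have := hW'leg (!p) v (hW'sub (!p) h1) ho
            simp only [hσOpp, if_pos h1]
            exact ⟨this.1, (this.2).1⟩
          · by_cases h2 : v ∈ B
            · have := hBstep v h2 h1 ho
              simp only [hσOpp, if_neg h1, if_pos h2]
              exact ⟨this.1, hB_sub this.2⟩
            · by_cases h3 : v ∈ U''
              · have := hW''leg (!p) v h3 ho
                simp only [hσOpp, if_neg h1, if_neg h2, if_pos h3]
                exact ⟨this.1, this.2.1⟩
              · simp only [hσOpp, if_neg h1, if_neg h2, if_neg h3]
                exact dfltMove_spec E hU hv
      · intro r v hv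
        rcases hrp r with hr | hr <;> subst hr
        · -- player p wins from W'' p
          rw [hWsp] at hv
          rw [hσsp]
          intro π hplay hcons h0
          have hstay : ∀ n, π n ∈ U'' := by
            intro n
            induction n with
            | zero => rw [h0]; exact hW''sub p hv
            | succ k ihk =>
              by_cases ho : own (π k) = p
              · rw [hcons k ho]
                simp only [hσPl, if_pos ihk]
                exact (hW''leg p (π k) ihk ho).2
              · have ho' : own (π k) = !p := by
                  rcases hrp (own (π k)) with h | h
                  · exact absurd h ho
                  · exact h
                exact hU''_noesc (π k) ihk ho' (π (k+1)) (hplay.1 (k+1)) (hplay.2 k)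
          exact hW''win p v hv π ⟨hstay, hplay.2⟩
            (fun n ho => by
              rw [hcons n ho]
              simp only [hσPl, if_pos (hstay n)]) h0
        · -- player !p wins from B ∪ W'' (!p)
          rw [hWsnp] at hv
          rw [hσsnp]
          intro π hplay hcons h0
          by_cases hreach : ∃ t, π t ∈ W' (!p)
          · obtain ⟨t, ht⟩ := hreach
            have hstayW : ∀ k, π (t + k) ∈ W' (!p) := by
              intro k
              induction k with
              | zero => simpa using ht
              | succ k ihk =>
                have hgoal : t + (k+1) = t + k + 1 := by omega
                rw [hgoal]
                by_cases ho : own (π (t+k)) = p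
                · have hu' : π (t+k+1) ∈ U' :=
                    hU'_noesc (π (t+k)) (hW'sub (!p) ihk) ho (π (t+k+1))
                      (hplay.1 (t+k+1)) (hplay.2 (t+k))
                  exact hkey (π (t+k)) ihk (π (t+k+1)) hu' (hplay.2 (t+k)) (Or.inl ho)
                · have ho' : own (π (t+k)) = !p := by
                    rcases hrp (own (π (t+k))) with h | h
                    · exact absurd h ho
                    · exact h
                  have heq : π (t+k+1) = σOpp (π (t+k)) := hcons (t+k) ho'
                  rw [heq]
                  simp only [hσOpp, if_pos ihk]
                  have hleg := hW'leg (!p) (π (t+k)) (hW'sub (!p) ihk) ho'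
                  exact hkey (π (t+k)) ihk (σ' (!p) (π (t+k))) hleg.2 hleg.1 (Or.inr rfl)
            have hstayW' : ∀ k, π (k + t) ∈ W' (!p) := fun k => by
              rw [show k + t = t + k by omega]; exact hstayW k
            have hwin := hW'win (!p) (π t) ht (fun k => π (k + t))
              ⟨fun k => hW'sub (!p) (hstayW' k), (isPlay_shift E hplay t).2⟩
              (fun k ho => by
                show π (k+1+t) = σ' (!p) (π (k+t))
                have := hcons (k+t) ho
                rw [show k+1+t = k+t+1 by omega, this]
                simp only [hσOpp, if_pos (hstayW' k)])
              (by show π (0+t) = π t; rw [Nat.zero_add])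
            exact (winsPlay_shift col (!p) π t).mp hwin
          · push_neg at hreach
            have hnotB : ∀ t, π t ∉ B := by
              intro t hBt
              have hσforce : ∀ m w, w ∈ attrN E own U (!p) (W' (!p)) (m+1) →
                  w ∉ attrN E own U (!p) (W' (!p)) m → own w = !p →
                  σOpp w ∈ attrN E own U (!p) (W' (!p)) m := by
                intro m w h1 h2 ho
                have hwB : w ∈ B := Set.mem_iUnion.mpr ⟨m+1, h1⟩
                have hwW : w ∉ W' (!p) := fun hn =>
                  h2 (attrN_mono E own U (!p) (W' (!p)) (Nat.zero_le m) hn)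
                simp only [hσOpp, if_neg hwW, if_pos hwB]
                exact (attrStrat_spec E own U (!p) (W' (!p)) h1 h2 ho).2
              obtain ⟨m, hm⟩ := Set.mem_iUnion.mp hBt
              obtain ⟨k, hk⟩ := attr_forcing E own U (!p) (W' (!p)) σOpp hσforce m
                (fun j => π (j + t)) (isPlay_shift E hplay t) (consistent_shift own hcons t)
                (by show π (0+t) ∈ _; rw [Nat.zero_add]; exact hm)
              exact hreach (k + t) hk
            have hvW'' : v ∈ W'' (!p) := by
              rcases hv with h | h
              · exact absurd (show π 0 ∈ B by rw [h0]; exact h) (hnotB 0)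
              · exact h
            have hstay'' : ∀ n, π n ∈ U'' := fun n => ⟨hplay.1 n, hnotB n⟩
            exact hW''win (!p) v hvW'' π ⟨hstay'', hplay.2⟩
              (fun n ho => by
                rw [hcons n ho]
                simp only [hσOpp, if_neg (hreach n), if_neg (hnotB n), if_pos (hstay'' n)]) h0

end Games

section TheGame

variable {Sig : Type} (M₁ M₂ : DetAuto Sig) (c₁ : M₁.Q → ℕ) (c₂ : M₂.Q → ℕ)

def WdT : Type := {n : ℕ // n ∈ Finset.image c₂ Finset.univ}

instance : Fintype (WdT M₂ c₂) := by unfold WdT; infer_instance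

def BitV : Type := M₁.Q × M₂.Q × WdT M₂ c₂

def LetV : Type := M₁.Q × M₂.Q × WdT M₂ c₂ × Bool

def GV : Type := BitV M₁ M₂ c₂ ⊕ LetV M₁ M₂ c₂

instance : Fintype (BitV M₁ M₂ c₂) := by unfold BitV; infer_instance
instance : Fintype (LetV M₁ M₂ c₂) := by unfold LetV; infer_instance
instance : Fintype (GV M₁ M₂ c₂) := by unfold GV; infer_instance

def K₁ : ℕ := Finset.univ.sup c₁

def BIG : ℕ := 2 * K₁ M₁ c₁ + 4

def wmem (q : M₂.Q) : c₂ q ∈ Finset.image c₂ Finset.univ :=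
  Finset.mem_image_of_mem _ (Finset.mem_univ q)

def wmax (w : WdT M₂ c₂) (q : M₂.Q) : WdT M₂ c₂ :=
  ⟨max w.1 (c₂ q), by
    rcases max_choice w.1 (c₂ q) with h | h <;> rw [h]
    · exact w.2
    · exact wmem M₂ c₂ q⟩

def gown : GV M₁ M₂ c₂ → Bool := Sum.elim (fun _ => false) (fun _ => true)

def gcol : GV M₁ M₂ c₂ → ℕ :=
  Sum.elim (fun bv => c₁ bv.1 + 2)
    (fun lv => if lv.2.2.2 then BIG M₁ c₁ + lv.2.2.1.1 else 0)

def bitStep (bv : BitV M₁ M₂ c₂) (b : Bool) : LetV M₁ M₂ c₂ :=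
  (bv.1, bv.2.1, bv.2.2, b)

def letStep (lv : LetV M₁ M₂ c₂) (a : Sig) : BitV M₁ M₂ c₂ :=
  (M₁.δ lv.1 a, M₂.δ lv.2.1 a,
    if lv.2.2.2 then ⟨c₂ (M₂.δ lv.2.1 a), wmem M₂ c₂ _⟩ else wmax M₂ c₂ lv.2.2.1 (M₂.δ lv.2.1 a))

def gE : GV M₁ M₂ c₂ → GV M₁ M₂ c₂ → Prop :=
  Sum.elim (fun bv u => ∃ b, u = Sum.inr (bitStep M₁ M₂ c₂ bv b))
    (fun lv u => ∃ a, u = Sum.inl (letStep M₁ M₂ c₂ lv a))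

def trace (y : ℕ → Bool) (x : ℕ → Sig) : ℕ → BitV M₁ M₂ c₂
  | 0 => (M₁.init, M₂.init, ⟨c₂ M₂.init, wmem M₂ c₂ _⟩)
  | j + 1 => letStep M₁ M₂ c₂ (bitStep M₁ M₂ c₂ (trace y x j) (y j)) (x j)

def gplay (y : ℕ → Bool) (x : ℕ → Sig) : ℕ → GV M₁ M₂ c₂ := fun n =>
  if n % 2 = 0 then Sum.inl (trace M₁ M₂ c₂ y x (n / 2))
  else Sum.inr (bitStep M₁ M₂ c₂ (trace M₁ M₂ c₂ y x (n / 2)) (y (n / 2)))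

variable (y : ℕ → Bool) (x : ℕ → Sig)

theorem gplay_even (j : ℕ) : gplay M₁ M₂ c₂ y x (2 * j) = Sum.inl (trace M₁ M₂ c₂ y x j) := by
  have h1 : (2 * j) % 2 = 0 := by omega
  have h2 : 2 * j / 2 = j := by omega
  simp [gplay, h1, h2]
  rfl

theorem gplay_odd (j : ℕ) : gplay M₁ M₂ c₂ y x (2 * j + 1) =
    Sum.inr (bitStep M₁ M₂ c₂ (trace M₁ M₂ c₂ y x j) (y j)) := by
  have h1 : ¬((2 * j + 1) % 2 = 0) := by omega
  have h2 : (2 * j + 1) / 2 = j := by omega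
  simp [gplay, h1, h2]
  rfl

theorem gplay_isPlay :
    IsPlay (gE M₁ M₂ c₂) Set.univ (gplay M₁ M₂ c₂ y x) := by
  constructor
  · intro n; trivial
  · intro n
    rcases Nat.even_or_odd n with ⟨j, hj⟩ | ⟨j, hj⟩
    · have hn : n = 2 * j := by omega
      rw [hn, gplay_even, gplay_odd]
      exact ⟨y j, rfl⟩
    · have hn : n = 2 * j + 1 := by omega
      rw [hn, show 2 * j + 1 + 1 = 2 * (j + 1) by omega, gplay_odd, gplay_even]
      exact ⟨x j, rfl⟩

theorem trace_fst (j : ℕ) : (trace M₁ M₂ c₂ y x j).1 = M₁.run x j := by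
  induction j with
  | zero => rfl
  | succ j ihj =>
    show (letStep M₁ M₂ c₂ _ _).1 = M₁.δ (M₁.run x j) (x j)
    rw [← ihj]; rfl

theorem trace_snd (j : ℕ) : (trace M₁ M₂ c₂ y x j).2.1 = M₂.run x j := by
  induction j with
  | zero => rfl
  | succ j ihj =>
    show (letStep M₁ M₂ c₂ _ _).2.1 = M₂.δ (M₂.run x j) (x j)
    rw [← ihj]; rfl

def Wt (j : ℕ) : ℕ := (trace M₁ M₂ c₂ y x j).2.2.1

theorem Wt_zero : Wt M₁ M₂ c₂ y x 0 = c₂ M₂.init := rfl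

theorem Wt_succ (j : ℕ) : Wt M₁ M₂ c₂ y x (j + 1) =
    if y j then c₂ (M₂.run x (j + 1)) else max (Wt M₁ M₂ c₂ y x j) (c₂ (M₂.run x (j + 1))) := by
  have hq : M₂.δ (trace M₁ M₂ c₂ y x j).2.1 (x j) = M₂.run x (j + 1) := by
    rw [trace_snd]; rfl
  show (letStep M₁ M₂ c₂ (bitStep M₁ M₂ c₂ _ (y j)) (x j)).2.2.1 = _
  rw [letStep]
  by_cases hb : y j
  · simp only [bitStep, hb, ↓reduceIte, ← hq]
  · simp only [bitStep, hb, if_false, wmax, ← hq]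
    rfl

theorem Wt_ge (j : ℕ) : c₂ (M₂.run x j) ≤ Wt M₁ M₂ c₂ y x j := by
  cases j with
  | zero => exact le_of_eq rfl
  | succ j =>
    rw [Wt_succ]
    by_cases hb : y j
    · rw [if_pos hb]
    · rw [if_neg hb]; exact le_max_right _ _

theorem gcol_even (j : ℕ) :
    gcol M₁ M₂ c₁ c₂ (gplay M₁ M₂ c₂ y x (2 * j)) = c₁ (M₁.run x j) + 2 := by
  rw [gplay_even]
  show c₁ (trace M₁ M₂ c₂ y x j).1 + 2 = _
  rw [trace_fst]

theorem gcol_odd (j : ℕ) :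
    gcol M₁ M₂ c₁ c₂ (gplay M₁ M₂ c₂ y x (2 * j + 1)) =
      if y j then BIG M₁ c₁ + Wt M₁ M₂ c₂ y x j else 0 := by
  rw [gplay_odd]
  rfl

theorem sem_true :
    WinsPlay (gcol M₁ M₂ c₁ c₂) true (gplay M₁ M₂ c₂ y x) ↔
      ((ParityAccept M₁ c₁ x ∧ {j | y j = true}.Finite) ∨
       (ParityAccept M₂ c₂ x ∧ ¬ {j | y j = true}.Finite)) := by
  have hc₁le : ∀ j, c₁ (M₁.run x j) + 2 ≤ BIG M₁ c₁ := by
    intro j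
    have h := Finset.le_sup (f := c₁) (Finset.mem_univ (M₁.run x j))
    rw [BIG]; unfold K₁; omega
  by_cases hfin : {j | y j = true}.Finite
  · -- finitely many acc
    have hev : ∃ J, ∀ j ≥ J, y j = false := by
      by_contra hc
      push_neg at hc
      have hfr : ∃ᶠ j in atTop, y j = true := by
        rw [frequently_atTop]
        intro N
        obtain ⟨j, hj, hy⟩ := hc N
        exact ⟨j, hj, by revert hy; cases y j <;> simp⟩
      exact (Nat.frequently_atTop_iff_infinite.mp hfr) hfin
    obtain ⟨J, hJ⟩ := hev
    have hodd0 : ∀ m, FreqEq (fun j => gcol M₁ M₂ c₁ c₂ (gplay M₁ M₂ c₂ y x (2 * j + 1))) m →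
        m = 0 := by
      intro m hm
      rw [FreqEq, frequently_atTop] at hm
      obtain ⟨j, hj, he⟩ := hm J
      rw [gcol_odd, hJ j hj] at he
      simpa using he.symm
    constructor
    · rintro ⟨m, hm1, hm2, hm3⟩
      left
      refine ⟨?_, hfin⟩
      have hm1' : m % 2 = 1 := by simpa using hm1
      have hme : FreqEq (fun j => gcol M₁ M₂ c₁ c₂ (gplay M₁ M₂ c₂ y x (2 * j))) m := by
        rcases (freqEq_parity_split (fun n => gcol M₁ M₂ c₁ c₂ (gplay M₁ M₂ c₂ y x n)) m).mp hm2
          with h | h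
        · exact h
        · have := hodd0 m h; omega
      have hge : 2 ≤ m := by
        obtain ⟨j, hj⟩ := hme.exists
        simp only [] at hj
        rw [gcol_even] at hj
        omega
      refine ⟨m - 2, by rw [Nat.odd_iff]; omega, ?_, ?_⟩
      · apply hme.mono
        intro j hj
        simp only [] at hj
        rw [gcol_even] at hj
        omega
      · intro m' hm'
        have h1 : FreqEq (fun j => gcol M₁ M₂ c₁ c₂ (gplay M₁ M₂ c₂ y x (2 * j))) (m' + 2) := by
          apply hm'.mono
          intro j hj
          show gcol M₁ M₂ c₁ c₂ (gplay M₁ M₂ c₂ y x (2 * j)) = m' + 2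
          rw [gcol_even, hj]
        have := hm3 (m' + 2)
          ((freqEq_parity_split (fun n => gcol M₁ M₂ c₁ c₂ (gplay M₁ M₂ c₂ y x n)) (m' + 2)).mpr
            (Or.inl h1))
        omega
    · rintro (⟨⟨m₀, hodd, hfr, hmax⟩, _⟩ | ⟨_, hinf⟩)
      swap
      · exact absurd hfin hinf
      refine ⟨m₀ + 2, ?_, ?_, ?_⟩
      · rw [Nat.odd_iff] at hodd
        show (m₀ + 2) % 2 = 1
        omega
      · apply (freqEq_parity_split (fun n => gcol M₁ M₂ c₁ c₂ (gplay M₁ M₂ c₂ y x n)) (m₀ + 2)).mpr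
        left
        apply hfr.mono
        intro j hj
        show gcol M₁ M₂ c₁ c₂ (gplay M₁ M₂ c₂ y x (2 * j)) = m₀ + 2
        rw [gcol_even, hj]
      · intro m' hm'
        rcases (freqEq_parity_split (fun n => gcol M₁ M₂ c₁ c₂ (gplay M₁ M₂ c₂ y x n)) m').mp hm'
          with h | h
        · have h2 : 2 ≤ m' := by
            obtain ⟨j, hj⟩ := h.exists
            simp only [] at hj
            rw [gcol_even] at hj
            omega
          have h3 : FreqEq (fun j => c₁ (M₁.run x j)) (m' - 2) := by
            apply h.mono
            intro j hj
            simp only [] at hj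
            rw [gcol_even] at hj
            show c₁ (M₁.run x j) = m' - 2
            omega
          have := hmax _ h3
          omega
        · have := hodd0 m' h
          omega
  · -- infinitely many acc
    have hfreqtrue : ∀ N, ∃ j ≥ N, y j = true := by
      have := (Nat.frequently_atTop_iff_infinite (p := fun j => y j = true)).mpr hfin
      rwa [frequently_atTop] at this
    obtain ⟨M, hMfr, hMmax⟩ := exists_maxFreq (fun j => c₂ (M₂.run x j))
      (Finset.image c₂ Finset.univ) (fun j => wmem M₂ c₂ _)
    have hdev : ∃ J, ∀ j ≥ J, c₂ (M₂.run x j) ≤ M := by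
      have hall : ∀ᶠ j in atTop,
          ∀ m ∈ (Finset.image c₂ Finset.univ).filter (fun m => M < m),
            c₂ (M₂.run x j) ≠ m := by
        rw [eventually_all_finset]
        intro m hm
        rw [Finset.mem_filter] at hm
        have hnf : ¬ FreqEq (fun j => c₂ (M₂.run x j)) m := fun hf =>
          absurd (hMmax m hf) (by omega)
        rw [FreqEq, not_frequently] at hnf
        exact hnf
      obtain ⟨J, hJ⟩ := eventually_atTop.mp hall
      refine ⟨J, fun j hj => ?_⟩
      by_contra hgt
      push_neg at hgt
      exact hJ j hj (c₂ (M₂.run x j)) (Finset.mem_filter.mpr ⟨wmem M₂ c₂ _, hgt⟩) rfl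
    obtain ⟨J, hJle⟩ := hdev
    have hWle : ∃ T, ∀ t ≥ T, Wt M₁ M₂ c₂ y x t ≤ M := by
      obtain ⟨r, hr, hrt⟩ := hfreqtrue J
      refine ⟨r + 1, ?_⟩
      have hstep : ∀ k, Wt M₁ M₂ c₂ y x (r + 1 + k) ≤ M := by
        intro k
        induction k with
        | zero =>
          rw [Nat.add_zero, Wt_succ, hrt, if_pos rfl]
          exact hJle (r + 1) (by omega)
        | succ k ihk =>
          rw [show r + 1 + (k + 1) = (r + 1 + k) + 1 by omega, Wt_succ]
          by_cases hb : y (r + 1 + k) = true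
          · rw [hb, if_pos rfl]
            exact hJle _ (by omega)
          · rw [if_neg (by simpa using hb)]
            exact max_le ihk (hJle _ (by omega))
      intro t ht
      have := hstep (t - (r + 1))
      rwa [show r + 1 + (t - (r + 1)) = t by omega] at this
    obtain ⟨T, hT⟩ := hWle
    have hWM : ∀ N, ∃ t ≥ N, y t = true ∧ Wt M₁ M₂ c₂ y x t = M := by
      intro N
      obtain ⟨j, hj, hdj⟩ := frequently_atTop.mp hMfr (max N T)
      simp only [] at hdj
      have hex : ∃ t, j ≤ t ∧ y t = true := by
        obtain ⟨t, ht, h⟩ := hfreqtrue j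
        exact ⟨t, ht, h⟩
      obtain ⟨htj, htt⟩ := Nat.find_spec hex
      have hmono : ∀ k, j + k ≤ Nat.find hex → M ≤ Wt M₁ M₂ c₂ y x (j + k) := by
        intro k
        induction k with
        | zero =>
          intro _
          rw [Nat.add_zero, ← hdj]
          exact Wt_ge M₁ M₂ c₂ y x j
        | succ k ihk =>
          intro hle
          have hnt : ¬ (j ≤ j + k ∧ y (j + k) = true) := Nat.find_min hex (by omega)
          have hyf : ¬ (y (j + k) = true) := fun h => hnt ⟨by omega, h⟩
          rw [show j + (k + 1) = (j + k) + 1 by omega, Wt_succ, if_neg hyf]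
          exact le_trans (ihk (by omega)) (le_max_left _ _)
      have hM1 : M ≤ Wt M₁ M₂ c₂ y x (Nat.find hex) := by
        have := hmono (Nat.find hex - j) (by omega)
        rwa [show j + (Nat.find hex - j) = Nat.find hex by omega] at this
      have hM2 : Wt M₁ M₂ c₂ y x (Nat.find hex) ≤ M := hT _ (by omega)
      exact ⟨Nat.find hex, by omega, htt, le_antisymm hM2 hM1⟩
    have hBIGeven : BIG M₁ c₁ % 2 = 0 := by rw [BIG]; omega
    have hoddM : FreqEq (fun j => gcol M₁ M₂ c₁ c₂ (gplay M₁ M₂ c₂ y x (2 * j + 1)))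
        (BIG M₁ c₁ + M) := by
      rw [FreqEq, frequently_atTop]
      intro N
      obtain ⟨t, ht, hyt, hWtM⟩ := hWM N
      refine ⟨t, ht, ?_⟩
      show gcol M₁ M₂ c₁ c₂ (gplay M₁ M₂ c₂ y x (2 * t + 1)) = BIG M₁ c₁ + M
      rw [gcol_odd, hyt, if_pos rfl, hWtM]
    have hoddle : ∀ m, FreqEq (fun j => gcol M₁ M₂ c₁ c₂ (gplay M₁ M₂ c₂ y x (2 * j + 1))) m →
        m = 0 ∨ m ≤ BIG M₁ c₁ + M := by
      intro m hm
      by_cases hm0 : m = 0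
      · exact Or.inl hm0
      right
      rw [FreqEq, frequently_atTop] at hm
      obtain ⟨j, hj, he⟩ := hm T
      rw [gcol_odd] at he
      by_cases hyj : y j = true
      · rw [hyj, if_pos rfl] at he
        have := hT j hj
        omega
      · rw [if_neg hyj] at he
        omega
    constructor
    · rintro ⟨m, hm1, hm2, hm3⟩
      right
      refine ⟨?_, hfin⟩
      have hm1' : m % 2 = 1 := by simpa using hm1
      have hle1 : BIG M₁ c₁ + M ≤ m := hm3 _
        ((freqEq_parity_split (fun n => gcol M₁ M₂ c₁ c₂ (gplay M₁ M₂ c₂ y x n)) _).mpr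
          (Or.inr hoddM))
      have hle2 : m ≤ BIG M₁ c₁ + M := by
        rcases (freqEq_parity_split (fun n => gcol M₁ M₂ c₁ c₂ (gplay M₁ M₂ c₂ y x n)) m).mp hm2
          with h | h
        · obtain ⟨j, hj⟩ := h.exists
          simp only [] at hj
          rw [gcol_even] at hj
          have := hc₁le j
          omega
        · rcases hoddle m h with h0 | hle
          · omega
          · exact hle
      refine ⟨M, ?_, hMfr, hMmax⟩
      rw [Nat.odd_iff]
      omega
    · rintro (⟨_, hf⟩ | ⟨⟨M', hModd, hMfr', hMmax'⟩, _⟩)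
      · exact absurd hf hfin
      have hMM : M' = M := le_antisymm (hMmax M' hMfr') (hMmax' M hMfr)
      rw [hMM] at hModd
      rw [Nat.odd_iff] at hModd
      refine ⟨BIG M₁ c₁ + M, ?_, ?_, ?_⟩
      · show (BIG M₁ c₁ + M) % 2 = 1
        omega
      · exact (freqEq_parity_split (fun n => gcol M₁ M₂ c₁ c₂ (gplay M₁ M₂ c₂ y x n)) _).mpr
          (Or.inr hoddM)
      · intro m' hm'
        rcases (freqEq_parity_split (fun n => gcol M₁ M₂ c₁ c₂ (gplay M₁ M₂ c₂ y x n)) m').mp hm'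
          with h | h
        · obtain ⟨j, hj⟩ := h.exists
          simp only [] at hj
          rw [gcol_even] at hj
          have := hc₁le j
          omega
        · rcases hoddle m' h with h0 | hle
          · omega
          · exact hle

theorem gE_total (hS : Nonempty Sig) :
    ∀ v ∈ (Set.univ : Set (GV M₁ M₂ c₂)), ∃ w, w ∈ Set.univ ∧ gE M₁ M₂ c₂ v w := by
  intro v _
  cases v with
  | inl bv => exact ⟨Sum.inr (bitStep M₁ M₂ c₂ bv true), trivial, true, rfl⟩
  | inr lv =>
    obtain ⟨a⟩ := hS
    exact ⟨Sum.inl (letStep M₁ M₂ c₂ lv a), trivial, a, rfl⟩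

theorem build_refuter (hS : Nonempty Sig) (L₁ L₂ : Set (ℕ → Sig))
    (hspec₁ : ∀ x, x ∈ L₁ ↔ ParityAccept M₁ c₁ x)
    (hspec₂ : ∀ x, x ∈ L₂ ↔ ParityAccept M₂ c₂ x)
    (σ : GV M₁ M₂ c₂ → GV M₁ M₂ c₂)
    (hleg : Legal (gE M₁ M₂ c₂) (gown M₁ M₂ c₂) Set.univ true σ)
    (hwin : WinsFrom (gE M₁ M₂ c₂) (gown M₁ M₂ c₂) (gcol M₁ M₂ c₁ c₂) Set.univ true σ
      (Sum.inl (M₁.init, M₂.init, ⟨c₂ M₂.init, wmem M₂ c₂ M₂.init⟩))) :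
    ∃ R : Transducer Bool Sig, DBWSepRefuter L₁ L₂ R := by
  classical
  obtain ⟨a₀⟩ := hS
  have haOf : ∀ lv : LetV M₁ M₂ c₂, ∃ a : Sig,
      σ (Sum.inr lv) = Sum.inl (letStep M₁ M₂ c₂ lv a) :=
    fun lv => (hleg (Sum.inr lv) trivial rfl).1
  choose aOf haspec using haOf
  let toBit : GV M₁ M₂ c₂ → BitV M₁ M₂ c₂ := Sum.elim id (fun lv => (lv.1, lv.2.1, lv.2.2.1))
  let R : Transducer Bool Sig :=
    { S := GV M₁ M₂ c₂
      init := Sum.inl (M₁.init, M₂.init, ⟨c₂ M₂.init, wmem M₂ c₂ M₂.init⟩)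
      ρ := fun s b => Sum.elim (fun bv => Sum.inr (bitStep M₁ M₂ c₂ bv b))
        (fun lv => Sum.inr (bitStep M₁ M₂ c₂ (toBit (σ (Sum.inr lv))) b)) s
      τ := Sum.elim (fun _ => a₀) aOf }
  refine ⟨R, ?_⟩
  intro y
  set x := R.out y with hx
  have hrun : ∀ j, R.run y (j + 1) =
      Sum.inr (bitStep M₁ M₂ c₂ (trace M₁ M₂ c₂ y x j) (y j)) := by
    intro j
    induction j with
    | zero => rfl
    | succ j ihj =>
      have hxj : x j = aOf (bitStep M₁ M₂ c₂ (trace M₁ M₂ c₂ y x j) (y j)) := by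
        show R.τ (R.run y (j + 1)) = _
        rw [ihj]
        rfl
      have hσj : σ (Sum.inr (bitStep M₁ M₂ c₂ (trace M₁ M₂ c₂ y x j) (y j))) =
          Sum.inl (trace M₁ M₂ c₂ y x (j + 1)) := by
        rw [haspec, ← hxj]
        rfl
      show R.ρ (R.run y (j + 1)) (y (j + 1)) = _
      rw [ihj]
      show Sum.inr (bitStep M₁ M₂ c₂
        (toBit (σ (Sum.inr (bitStep M₁ M₂ c₂ (trace M₁ M₂ c₂ y x j) (y j))))) (y (j + 1))) = _
      rw [hσj]
      rfl
  have hxj : ∀ j, x j = aOf (bitStep M₁ M₂ c₂ (trace M₁ M₂ c₂ y x j) (y j)) := by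
    intro j
    show R.τ (R.run y (j + 1)) = _
    rw [hrun j]
    rfl
  have hσall : ∀ j, σ (Sum.inr (bitStep M₁ M₂ c₂ (trace M₁ M₂ c₂ y x j) (y j))) =
      Sum.inl (trace M₁ M₂ c₂ y x (j + 1)) := by
    intro j
    rw [haspec, ← hxj j]
    rfl
  have hcons : Consistent (gown M₁ M₂ c₂) true σ (gplay M₁ M₂ c₂ y x) := by
    intro n ho
    rcases Nat.even_or_odd n with ⟨j, hj⟩ | ⟨j, hj⟩
    · exfalso
      rw [show n = 2 * j by omega, gplay_even] at ho
      simp [gown] at ho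
    · rw [show n = 2 * j + 1 by omega] at ho ⊢
      rw [show 2 * j + 1 + 1 = 2 * (j + 1) by omega, gplay_even, gplay_odd]
      exact (hσall j).symm
  have hwp := hwin (gplay M₁ M₂ c₂ y x) (gplay_isPlay M₁ M₂ c₂ y x) hcons
    (by rw [show (0 : ℕ) = 2 * 0 by omega, gplay_even]; rfl)
  have hsem := (sem_true M₁ M₂ c₁ c₂ y x).mp hwp
  rcases hsem with ⟨hpa, hf⟩ | ⟨hpa, hf⟩
  · exact Or.inl ⟨(hspec₁ x).mpr hpa, hf⟩
  · exact Or.inr ⟨(hspec₂ x).mpr hpa, hf⟩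

theorem build_separator (L₁ L₂ : Set (ℕ → Sig))
    (hspec₁ : ∀ x, x ∈ L₁ ↔ ParityAccept M₁ c₁ x)
    (hspec₂ : ∀ x, x ∈ L₂ ↔ ParityAccept M₂ c₂ x)
    (σ : GV M₁ M₂ c₂ → GV M₁ M₂ c₂)
    (hleg : Legal (gE M₁ M₂ c₂) (gown M₁ M₂ c₂) Set.univ false σ)
    (hwin : WinsFrom (gE M₁ M₂ c₂) (gown M₁ M₂ c₂) (gcol M₁ M₂ c₁ c₂) Set.univ false σ
      (Sum.inl (M₁.init, M₂.init, ⟨c₂ M₂.init, wmem M₂ c₂ M₂.init⟩))) :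
    DBWSeparable L₁ L₂ := by
  classical
  have hbOf : ∀ bv : BitV M₁ M₂ c₂, ∃ b : Bool,
      σ (Sum.inl bv) = Sum.inr (bitStep M₁ M₂ c₂ bv b) :=
    fun bv => (hleg (Sum.inl bv) trivial rfl).1
  choose bOf hbspec using hbOf
  let Ma : DetAuto Sig :=
    { Q := BitV M₁ M₂ c₂
      init := (M₁.init, M₂.init, ⟨c₂ M₂.init, wmem M₂ c₂ M₂.init⟩)
      δ := fun bv a => letStep M₁ M₂ c₂ (bitStep M₁ M₂ c₂ bv (bOf bv)) a }
  set L : Set (ℕ → Sig) := {x | ∃ᶠ j in atTop, Ma.run x j ∈ {bv | bOf bv = true}} with hL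
  have hkey : ∀ x : ℕ → Sig,
      (x ∈ L₁ → x ∈ L) ∧ (x ∈ L₂ → x ∉ L) := by
    intro x
    set y : ℕ → Bool := fun j => bOf (Ma.run x j) with hy
    have htr : ∀ j, trace M₁ M₂ c₂ y x j = Ma.run x j := by
      intro j
      induction j with
      | zero => rfl
      | succ j ihj =>
        show letStep M₁ M₂ c₂ (bitStep M₁ M₂ c₂ (trace M₁ M₂ c₂ y x j) (y j)) (x j) = _
        rw [ihj]
        rfl
    have hcons : Consistent (gown M₁ M₂ c₂) false σ (gplay M₁ M₂ c₂ y x) := by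
      intro n ho
      rcases Nat.even_or_odd n with ⟨j, hj⟩ | ⟨j, hj⟩
      · rw [show n = 2 * j by omega]
        rw [show 2 * j + 1 = 2 * j + 1 from rfl, gplay_odd, gplay_even]
        rw [hbspec (trace M₁ M₂ c₂ y x j)]
        have : y j = bOf (trace M₁ M₂ c₂ y x j) := by rw [hy]; rw [htr j]
        rw [this]
      · exfalso
        rw [show n = 2 * j + 1 by omega, gplay_odd] at ho
        simp [gown] at ho
    have hwp := hwin (gplay M₁ M₂ c₂ y x) (gplay_isPlay M₁ M₂ c₂ y x) hcons
      (by rw [show (0 : ℕ) = 2 * 0 by omega, gplay_even]; rfl)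
    have hnw : ¬ WinsPlay (gcol M₁ M₂ c₁ c₂) true (gplay M₁ M₂ c₂ y x) :=
      fun h => not_winsPlay_both (gcol M₁ M₂ c₁ c₂) _ h hwp
    rw [sem_true M₁ M₂ c₁ c₂ y x] at hnw
    push_neg at hnw
    have hLiff : x ∈ L ↔ ¬ {j | y j = true}.Finite := by
      constructor
      · intro hxL hfin
        have : ∃ᶠ j in atTop, y j = true := by
          apply Filter.Frequently.mono hxL
          intro j hj
          exact hj
        exact (Nat.frequently_atTop_iff_infinite.mp this) hfin
      · intro hnfin
        have hfr := (Nat.frequently_atTop_iff_infinite (p := fun j => y j = true)).mpr hnfin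
        exact hfr.mono (fun j hj => hj)
    constructor
    · intro hx1
      have hpa := (hspec₁ x).mp hx1
      have := hnw.1 hpa
      exact hLiff.mpr this
    · intro hx2 hxL
      have hpa := (hspec₂ x).mp hx2
      exact (hLiff.mp hxL) (hnw.2 hpa)
  refine ⟨L, ⟨Ma, {bv | bOf bv = true}, fun x => Iff.rfl⟩, ?_, ?_⟩
  · exact fun x hx => (hkey x).1 hx
  · ext x
    simp only [Set.mem_inter_iff, Set.mem_empty_iff_false, iff_false, not_and]
    intro hxL hx2
    exact (hkey x).2 hx2 hxL

end TheGame


end PGame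

theorem sep_refuter_exclusive {Sig : Type} (L₁ L₂ : Set (ℕ → Sig))
    (hsep : DBWSeparable L₁ L₂) (R : Transducer Bool Sig)
    (href : DBWSepRefuter L₁ L₂ R) : False := by
  classical
  obtain ⟨L, ⟨Ma, acc, hMa⟩, hsub, hdisj⟩ := hsep
  let F : ℕ → R.S × Ma.Q := fun n => Nat.rec (R.init, Ma.init)
    (fun _ s => (R.ρ s.1 (decide (s.2 ∈ acc)),
      Ma.δ s.2 (R.τ (R.ρ s.1 (decide (s.2 ∈ acc)))))) n
  let y : ℕ → Bool := fun n => decide ((F n).2 ∈ acc)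
  set x := R.out y with hx
  have hF : ∀ n, (F n).1 = R.run y n ∧ (F n).2 = Ma.run x n := by
    intro n
    induction n with
    | zero => exact ⟨rfl, rfl⟩
    | succ n ihn =>
      have h1 : (F (n + 1)).1 = R.run y (n + 1) := by
        show R.ρ (F n).1 (decide ((F n).2 ∈ acc)) = R.ρ (R.run y n) (y n)
        rw [ihn.1]
      refine ⟨h1, ?_⟩
      have h2 : R.τ ((F (n + 1)).1) = x n := by
        rw [h1]
        rfl
      show Ma.δ (F n).2 (R.τ ((F (n + 1)).1)) = Ma.δ (Ma.run x n) (x n)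
      rw [ihn.2, h2]
  have hy : ∀ n, y n = decide (Ma.run x n ∈ acc) := by
    intro n
    show decide ((F n).2 ∈ acc) = _
    rw [(hF n).2]
  rcases href y with ⟨hx1, hfin⟩ | ⟨hx2, hinf⟩
  · have hL := (hMa x).mp (hsub hx1)
    have hfr : ∃ᶠ n in Filter.atTop, y n = true := by
      apply hL.mono
      intro n hn
      rw [hy n]
      simpa using hn
    exact (Nat.frequently_atTop_iff_infinite.mp hfr) hfin
  · have hfr := (Nat.frequently_atTop_iff_infinite (p := fun j => y j = true)).mpr hinf
    have hfr' : ∃ᶠ n in Filter.atTop, Ma.run x n ∈ acc := by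
      apply hfr.mono
      intro n hn
      rw [hy n] at hn
      simpa using hn
    have hxL : x ∈ L := (hMa x).mpr hfr'
    have hmem : x ∈ L ∩ L₂ := ⟨hxL, hx2⟩
    rw [hdisj] at hmem
    exact hmem

/-- For all ω-regular `L₁, L₂`, exactly one of the following holds:
(1) `(L₁, L₂)` is DBW-separable; (2) there exists a DBW-sep-refuter for `(L₁, L₂)`. -/
theorem stmt_9 {Sig : Type} [Fintype Sig] (L₁ L₂ : Set (ℕ → Sig))
    (h₁ : OmegaRegular L₁) (h₂ : OmegaRegular L₂) :
    Xor' (DBWSeparable L₁ L₂) (∃ R : Transducer Bool Sig, DBWSepRefuter L₁ L₂ R) := by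
  classical
  by_cases hS : Nonempty Sig
  · obtain ⟨M₁, c₁, hspec₁⟩ := h₁
    obtain ⟨M₂, c₂, hspec₂⟩ := h₂
    obtain ⟨W, σ, hWsub, hWcov, hWleg, hWwin⟩ :=
      PGame.determinacy (PGame.gE M₁ M₂ c₂) (PGame.gown M₁ M₂ c₂) (PGame.gcol M₁ M₂ c₁ c₂)
        (Set.univ : Set (PGame.GV M₁ M₂ c₂)).ncard Set.univ
        (PGame.gE_total M₁ M₂ c₂ hS) le_rfl
    set v₀ : PGame.GV M₁ M₂ c₂ :=
      Sum.inl (M₁.init, M₂.init, ⟨c₂ M₂.init, PGame.wmem M₂ c₂ M₂.init⟩) with hv₀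
    rcases hWcov v₀ trivial with hv | hv
    · right
      have href := PGame.build_refuter M₁ M₂ c₁ c₂ hS L₁ L₂ hspec₁ hspec₂ (σ true)
        (hWleg true) (hWwin true v₀ hv)
      refine ⟨href, ?_⟩
      intro hsep
      obtain ⟨R, hR⟩ := href
      exact sep_refuter_exclusive L₁ L₂ hsep R hR
    · left
      have hsep := PGame.build_separator M₁ M₂ c₁ c₂ L₁ L₂ hspec₁ hspec₂ (σ false)
        (hWleg false) (hWwin false v₀ hv)
      refine ⟨hsep, ?_⟩
      rintro ⟨R, hR⟩
      exact sep_refuter_exclusive L₁ L₂ hsep R hR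
  · left
    constructor
    · refine ⟨∅, ⟨⟨Unit, (), fun _ _ => ()⟩, ∅, ?_⟩, ?_, ?_⟩
      · intro xx
        exact absurd ⟨xx 0⟩ hS
      · intro xx hxx
        exact absurd ⟨xx 0⟩ hS
      · exact Set.empty_inter L₂
    · rintro ⟨R, -⟩
      exact hS ⟨R.τ R.init⟩
end

section
/- Two ω-regular languages L₁, L₂ ⊆ Σ^ω are not DBW-separable if and only if there exist finite words x ∈ Σ* and x₁, x₂ ∈ Σ⁺ such that x·(x₁+x₂)*·x₁^ω ⊆ L₁ and x·(x₁*·x₂)^ω ⊆ L₂. -/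
/-- `u` is a prefix of the infinite word `w`. -/
def HasPrefixWord {α : Type} (w : ℕ → α) (u : List α) : Prop :=
  ∀ i : Fin u.length, w i.1 = u.get i

/-- The ω-language `x·(x₁+x₂)*·x₁^ω`. -/
def LangA {α : Type} (x x₁ x₂ : List α) : Set (ℕ → α) :=
  { w | ∃ ws : List (List α), (∀ u ∈ ws, u = x₁ ∨ u = x₂) ∧
        ∀ n, HasPrefixWord w (x ++ ws.flatten ++ (List.replicate n x₁).flatten) }

/-- The ω-language `x·(x₁*·x₂)^ω`. -/
def LangB {α : Type} (x x₁ x₂ : List α) : Set (ℕ → α) :=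
  { w | ∃ j : ℕ → ℕ, ∀ n, HasPrefixWord w
        (x ++ ((List.range n).map (fun i => (List.replicate (j i) x₁).flatten ++ x₂)).flatten) }

/-!
Run the two parity automata in parallel, so that `L₁` and `L₂` are recognized by one automaton
with two colorings `C₁`, `C₂`. If some reachable state `q` has a loop `u` whose largest `C₁`-color
is odd and a loop `v` such that the largest `C₂`-color of `u·v` is odd, then `x₁ = u`, `x₂ = u·v`
form the pattern. Otherwise a deterministic Büchi automaton separates the languages: it records the
largest `C₂`-color seen since its last accepting visit, and accepts at `q` when that value bounds
the `C₂`-colors of a loop at `q` with odd largest `C₁`-color.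

Conversely, a Büchi automaton recognizing a superset of `L₁` visits an accepting state while
reading `x₁^m` from every state reached by `x·(x₁+x₂)*`, for a single `m` since there are finitely
many states; so it also accepts `x·(x₁^m·x₂)^ω ∈ L₂`.
-/

open Filter

namespace DetAuto

variable {α : Type}

section FiniteWords

variable (M : DetAuto α)

def evalFrom (q : M.Q) (u : List α) : M.Q := u.foldl M.δ q

def visitedFrom : M.Q → List α → List M.Q
  | _, [] => []
  | q, a :: u => M.δ q a :: visitedFrom (M.δ q a) u

/-- `0` for the empty word. -/
def maxColor (c : M.Q → ℕ) (q : M.Q) (u : List α) : ℕ :=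
  ((M.visitedFrom q u).map c : Multiset ℕ).sup

variable {M} {c : M.Q → ℕ} {q s : M.Q} {u v : List α}

@[simp] lemma evalFrom_cons (a : α) : M.evalFrom q (a :: u) = M.evalFrom (M.δ q a) u := rfl

@[simp] lemma evalFrom_append : M.evalFrom q (u ++ v) = M.evalFrom (M.evalFrom q u) v :=
  List.foldl_append

lemma evalFrom_flatten_of_loop {bs : List (List α)} (h : ∀ b ∈ bs, M.evalFrom q b = q) :
    M.evalFrom q bs.flatten = q := by
  induction bs with
  | nil => rfl
  | cons b bs ih =>
    rw [List.flatten_cons, evalFrom_append, h b List.mem_cons_self]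
    exact ih fun b hb => h b (List.mem_cons_of_mem _ hb)

lemma evalFrom_flatten_replicate_of_loop (h : M.evalFrom q u = q) (n : ℕ) :
    M.evalFrom q (List.replicate n u).flatten = q :=
  evalFrom_flatten_of_loop fun _ hb => List.eq_of_mem_replicate hb ▸ h

@[simp] lemma visitedFrom_cons (a : α) :
    M.visitedFrom q (a :: u) = M.δ q a :: M.visitedFrom (M.δ q a) u := rfl

@[simp] lemma visitedFrom_append :
    M.visitedFrom q (u ++ v) = M.visitedFrom q u ++ M.visitedFrom (M.evalFrom q u) v := by
  induction u generalizing q with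
  | nil => rfl
  | cons a u ih => simp [ih]

lemma le_maxColor (h : s ∈ M.visitedFrom q u) : c s ≤ M.maxColor c q u :=
  Multiset.le_sup (by simpa using ⟨s, h, rfl⟩)

lemma maxColor_le_iff {m : ℕ} : M.maxColor c q u ≤ m ↔ ∀ s ∈ M.visitedFrom q u, c s ≤ m := by
  rw [maxColor, Multiset.sup_le]
  simp

lemma maxColor_eq {d : ℕ} (hle : ∀ s ∈ M.visitedFrom q u, c s ≤ d)
    (hmem : ∃ s ∈ M.visitedFrom q u, c s = d) : M.maxColor c q u = d := by
  obtain ⟨s, hs, rfl⟩ := hmem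
  exact le_antisymm (maxColor_le_iff.2 hle) (le_maxColor hs)

lemma exists_color_eq_maxColor (hu : u ≠ []) : ∃ s ∈ M.visitedFrom q u, c s = M.maxColor c q u := by
  have hne : (M.visitedFrom q u : Multiset M.Q) ≠ 0 := by
    cases u with
    | nil => exact absurd rfl hu
    | cons a u => simp
  obtain ⟨s, hs, hmax⟩ := Multiset.exists_max_image c hne
  exact ⟨s, hs, (maxColor_eq hmax ⟨s, hs, rfl⟩).symm⟩

@[simp] lemma maxColor_nil : M.maxColor c q [] = 0 := rfl

lemma maxColor_append :
    M.maxColor c q (u ++ v) = max (M.maxColor c q u) (M.maxColor c (M.evalFrom q u) v) := by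
  simp [maxColor, ← Multiset.coe_add, Multiset.sup_add]

lemma maxColor_flatten_replicate_le (h : M.evalFrom q u = q) (n : ℕ) :
    M.maxColor c q (List.replicate n u).flatten ≤ M.maxColor c q u := by
  induction n with
  | zero => simp
  | succ n ih =>
    rw [List.replicate_succ, List.flatten_cons, maxColor_append, h]
    exact max_le le_rfl ih

end FiniteWords

section Runs

variable {M : DetAuto α} {w : ℕ → α}

lemma run_add (w : ℕ → α) (n k : ℕ) :
    M.run w (n + k) = M.evalFrom (M.run w n) ((List.range' n k).map w) := by
  induction k with
  | zero => rfl
  | succ k ih =>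
    rw [List.range'_1_concat, List.map_append, evalFrom_append, ← ih]
    rfl

lemma run_eq_evalFrom (w : ℕ → α) (n : ℕ) :
    M.run w n = M.evalFrom M.init ((List.range n).map w) := by
  simpa [List.range_eq_range', DetAuto.run] using run_add (M := M) w 0 n

lemma visitedFrom_run (w : ℕ → α) (n k : ℕ) :
    M.visitedFrom (M.run w n) ((List.range' n k).map w) =
      (List.range' (n + 1) k).map (M.run w) := by
  induction k generalizing n with
  | zero => rfl
  | succ k ih =>
    rw [List.range'_succ, List.map_cons, visitedFrom_cons, List.range'_succ, List.map_cons, ← ih]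
    rfl

lemma exists_loop_of_run_eq {a b : ℕ} (hab : a ≤ b) (h : M.run w a = M.run w b) :
    ∃ z, M.evalFrom (M.run w a) z = M.run w a ∧
      ∀ s, s ∈ M.visitedFrom (M.run w a) z ↔ ∃ t, a < t ∧ t ≤ b ∧ M.run w t = s := by
  refine ⟨(List.range' a (b - a)).map w, ?_, fun s => ?_⟩
  · rw [← run_add, Nat.add_sub_cancel' hab, h]
  · rw [visitedFrom_run, List.mem_map]
    constructor
    · rintro ⟨t, ht, rfl⟩
      rw [List.mem_range'_1] at ht
      exact ⟨t, by omega, by omega, rfl⟩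
    · rintro ⟨t, hat, htb, rfl⟩
      exact ⟨t, List.mem_range'_1.2 ⟨by omega, by omega⟩, rfl⟩

end Runs

end DetAuto

section Prefixes

variable {α : Type} {w : ℕ → α} {u v : List α}

lemma hasPrefixWord_iff_map_range : HasPrefixWord w u ↔ (List.range u.length).map w = u := by
  constructor
  · intro h
    refine List.ext_getElem (by simp) fun i hi _ => ?_
    simpa using h ⟨i, by simpa using hi⟩
  · rintro h ⟨i, hi⟩
    rw [List.get_eq_getElem, List.getElem_of_eq h.symm hi]
    simp

lemma HasPrefixWord.of_isPrefix (h : HasPrefixWord w v) (huv : u <+: v) : HasPrefixWord w u :=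
  fun i => by
    rw [h ⟨i, lt_of_lt_of_le i.2 huv.length_le⟩]
    exact (huv.getElem i.2).symm

lemma HasPrefixWord.append_stream {s : Stream' α} (h : HasPrefixWord s v) (u : List α) :
    HasPrefixWord (u ++ₛ s) (u ++ v) := by
  rintro ⟨i, hi⟩
  show (u ++ₛ s).get i = (u ++ v)[i]
  rcases lt_or_ge i u.length with hiu | hiu
  · rw [Stream'.get_append_left _ _ _ hiu, List.getElem_append_left hiu]
  · obtain ⟨j, rfl⟩ := Nat.exists_eq_add_of_le hiu
    rw [Stream'.get_append_right, List.getElem_append_right (by omega)]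
    simp only [add_tsub_cancel_left]
    exact h ⟨j, by simp at hi; omega⟩

lemma hasPrefixWord_cycle (hu : u ≠ []) (n : ℕ) :
    HasPrefixWord (Stream'.cycle u hu) (List.replicate n u).flatten := by
  induction n with
  | zero => exact fun i => i.elim0
  | succ n ih =>
    rw [Stream'.cycle_eq, List.replicate_succ, List.flatten_cons]
    exact ih.append_stream u

lemma HasPrefixWord.visitedFrom (M : DetAuto α) (h : HasPrefixWord w (u ++ v)) :
    M.visitedFrom (M.evalFrom M.init u) v =
      (List.range' (u.length + 1) v.length).map (M.run w) := by
  rw [hasPrefixWord_iff_map_range, List.length_append, List.range_eq_range',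
    ← List.range'_append_1, List.map_append] at h
  obtain ⟨hu, hv⟩ := List.append_inj h (by simp)
  rw [zero_add] at hv
  have := M.visitedFrom_run w u.length v.length
  rwa [hv, M.run_eq_evalFrom, List.range_eq_range', hu] at this

end Prefixes

namespace DetAuto

variable {α : Type} {M : DetAuto α} {c : M.Q → ℕ} {w : ℕ → α}

lemma parityAccept_iff : ParityAccept M c w ↔
    ∃ d, Odd d ∧ (∃ᶠ n in atTop, c (M.run w n) = d) ∧ ∀ᶠ n in atTop, c (M.run w n) ≤ d := by
  constructor
  · rintro ⟨d, hd, hfreq, hmax⟩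
    refine ⟨d, hd, hfreq, ?_⟩
    have hstate : ∀ q, ∀ᶠ n in atTop, M.run w n = q → c q ≤ d := fun q => by
      by_cases hq : c q ≤ d
      · exact Eventually.of_forall fun _ _ => hq
      · exact (not_frequently.1 (mt (hmax (c q)) hq)).mono fun n hn hrun => (hn (hrun ▸ rfl)).elim
    exact (eventually_all.2 hstate).mono fun n hn => hn _ rfl
  · rintro ⟨d, hd, hfreq, hle⟩
    refine ⟨d, hd, hfreq, fun m hm => ?_⟩
    obtain ⟨n, rfl, hn⟩ := (hm.and_eventually hle).exists
    exact hn

lemma parityAccept_of_loops {A B : ℕ → List α} {q : M.Q} {d : ℕ} (hd : Odd d)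
    (hpre : ∀ n, HasPrefixWord w (A n)) (hA : ∀ n, A (n + 1) = A n ++ B n)
    (hq : M.evalFrom M.init (A 0) = q) (hloop : ∀ n, M.evalFrom q (B n) = q)
    (hmax : ∀ n, M.maxColor c q (B n) = d) : ParityAccept M c w := by
  have hB : ∀ n, B n ≠ [] := fun n hn => by
    have := hmax n
    rw [hn, maxColor_nil] at this
    exact Nat.not_odd_zero (this ▸ hd)
  have hqn : ∀ n, M.evalFrom M.init (A n) = q := fun n => by
    induction n with
    | zero => exact hq
    | succ n ih => rw [hA, evalFrom_append, ih, hloop]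
  have hlen : ∀ n, n ≤ (A n).length := fun n => by
    induction n with
    | zero => exact Nat.zero_le _
    | succ n ih =>
      have := List.length_pos_iff.2 (hB n)
      rw [hA, List.length_append]
      omega
  have hblock : ∀ n, M.visitedFrom q (B n) =
      (List.range' ((A n).length + 1) (B n).length).map (M.run w) := fun n => by
    rw [← hqn n]
    exact (hA n ▸ hpre (n + 1)).visitedFrom M
  have hcol : ∀ n t, (A 0).length < t → t ≤ (A n).length → c (M.run w t) ≤ d := fun n => by
    induction n with
    | zero => omega
    | succ n ih =>
      intro t ht htn
      rcases le_or_gt t (A n).length with h | h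
      · exact ih t ht h
      · rw [← hmax n]
        apply le_maxColor
        rw [hblock, List.mem_map]
        rw [hA, List.length_append] at htn
        exact ⟨t, List.mem_range'_1.2 ⟨h, by omega⟩, rfl⟩
  refine parityAccept_iff.2 ⟨d, hd, frequently_atTop.2 fun N => ?_,
    (eventually_gt_atTop (A 0).length).mono fun t ht => hcol t t ht (hlen t)⟩
  obtain ⟨s, hs, hcs⟩ := exists_color_eq_maxColor (c := c) (q := q) (hB N)
  rw [hblock, List.mem_map] at hs
  obtain ⟨t, ht, rfl⟩ := hs
  have := List.mem_range'_1.1 ht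
  exact ⟨t, by linarith [hlen N], hcs.trans (hmax N)⟩

variable {x x₁ x₂ : List α} {q : M.Q}

lemma parityAccept_of_mem_langA (hq : M.evalFrom M.init x = q) (h₁ : M.evalFrom q x₁ = q)
    (h₂ : M.evalFrom q x₂ = q) (hodd : Odd (M.maxColor c q x₁)) (hw : w ∈ LangA x x₁ x₂) :
    ParityAccept M c w := by
  obtain ⟨ws, hws, hpre⟩ := hw
  refine parityAccept_of_loops (B := fun _ => x₁) hodd hpre (fun n => ?_) ?_ (fun _ => h₁)
    (fun _ => rfl)
  · simp [List.replicate_succ', List.flatten_append]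
  · have hblocks : ∀ b ∈ ws, M.evalFrom q b = q := fun b hb => by
      rcases hws b hb with rfl | rfl <;> assumption
    simp [hq, evalFrom_flatten_of_loop hblocks]

lemma parityAccept_of_mem_langB (hq : M.evalFrom M.init x = q) (h₁ : M.evalFrom q x₁ = q)
    (h₂ : M.evalFrom q x₂ = q) (hle : M.maxColor c q x₁ ≤ M.maxColor c q x₂)
    (hodd : Odd (M.maxColor c q x₂)) (hw : w ∈ LangB x x₁ x₂) : ParityAccept M c w := by
  obtain ⟨j, hpre⟩ := hw
  refine parityAccept_of_loops (B := fun n => (List.replicate (j n) x₁).flatten ++ x₂) hodd hpre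
    (fun n => ?_) (by simpa using hq) (fun n => ?_) (fun n => ?_)
  · simp [List.range_succ]
  · rw [evalFrom_append, evalFrom_flatten_replicate_of_loop h₁, h₂]
  · rw [maxColor_append, evalFrom_flatten_replicate_of_loop h₁]
    exact max_eq_right ((maxColor_flatten_replicate_le h₁ _).trans hle)

end DetAuto

section Inseparable

variable {α : Type} {x x₁ x₂ : List α}

lemma append_cycle_mem_langA {ws : List (List α)} (hws : ∀ b ∈ ws, b = x₁ ∨ b = x₂)
    (hx₁ : x₁ ≠ []) : (x ++ ws.flatten) ++ₛ Stream'.cycle x₁ hx₁ ∈ LangA x x₁ x₂ :=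
  ⟨ws, hws, fun n => (hasPrefixWord_cycle hx₁ n).append_stream _⟩

lemma append_cycle_mem_langB (m : ℕ) (h : (List.replicate m x₁).flatten ++ x₂ ≠ []) :
    x ++ₛ Stream'.cycle _ h ∈ LangB x x₁ x₂ :=
  ⟨fun _ => m, fun n => by simpa [List.map_const'] using (hasPrefixWord_cycle h n).append_stream x⟩

lemma le_length_flatten_replicate {u : List α} (hu : u ≠ []) (n : ℕ) :
    n ≤ (List.replicate n u).flatten.length := by
  simp only [List.length_flatten, List.map_replicate, List.sum_replicate, smul_eq_mul]
  exact Nat.le_mul_of_pos_right n (List.length_pos_iff.2 hu)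

lemma DetAuto.eventually_visits_of_append_cycle {M : DetAuto α} {acc : Set M.Q} {u : List α}
    (hx₁ : x₁ ≠ []) (hacc : ∃ᶠ n in atTop, M.run (u ++ₛ Stream'.cycle x₁ hx₁) n ∈ acc) :
    ∀ᶠ m in atTop, ∃ s ∈ M.visitedFrom (M.evalFrom M.init u) (List.replicate m x₁).flatten,
      s ∈ acc := by
  obtain ⟨t, ht, htacc⟩ := frequently_atTop.1 hacc (u.length + 1)
  refine eventually_atTop.2 ⟨t, fun m hm => ⟨_, ?_, htacc⟩⟩
  rw [((hasPrefixWord_cycle hx₁ m).append_stream u).visitedFrom M, List.mem_map]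
  have := le_length_flatten_replicate hx₁ m
  exact ⟨t, List.mem_range'_1.2 ⟨ht, by omega⟩, rfl⟩

lemma DetAuto.frequently_run_append_cycle_mem {M : DetAuto α} {acc : Set M.Q} {y z : List α}
    (h : y ++ z ≠ []) (hvisit : ∀ n, ∃ s ∈ M.visitedFrom
      (M.evalFrom M.init (x ++ (List.replicate n (y ++ z)).flatten)) y, s ∈ acc) :
    ∃ᶠ n in atTop, M.run (x ++ₛ Stream'.cycle (y ++ z) h) n ∈ acc :=
  frequently_atTop.2 fun N => by
    obtain ⟨s, hs, hsacc⟩ := hvisit N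
    have hpre : HasPrefixWord (x ++ₛ Stream'.cycle (y ++ z) h)
        (x ++ (List.replicate N (y ++ z)).flatten ++ y) :=
      ((hasPrefixWord_cycle h (N + 1)).append_stream x).of_isPrefix
        ⟨z, by simp [List.replicate_succ', List.flatten_append]⟩
    rw [hpre.visitedFrom M, List.mem_map] at hs
    obtain ⟨t, ht, rfl⟩ := hs
    have := le_length_flatten_replicate h N
    have := List.mem_range'_1.1 ht
    simp only [List.length_append] at this
    exact ⟨t, by omega, hsacc⟩

theorem not_dbwSeparable_of_langA_langB {L₁ L₂ : Set (ℕ → α)} (hx₁ : x₁ ≠ [])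
    (hA : LangA x x₁ x₂ ⊆ L₁) (hB : LangB x x₁ x₂ ⊆ L₂) : ¬ DBWSeparable L₁ L₂ := by
  rintro ⟨L, ⟨M, acc, hM⟩, hL₁, hL₂⟩
  let R : Set M.Q := {q | ∃ ws : List (List α), (∀ b ∈ ws, b = x₁ ∨ b = x₂) ∧
    M.evalFrom M.init (x ++ ws.flatten) = q}
  have hvisit : ∀ q, ∀ᶠ m in atTop,
      q ∈ R → ∃ s ∈ M.visitedFrom q (List.replicate m x₁).flatten, s ∈ acc := fun q => by
    by_cases hq : q ∈ R
    · obtain ⟨ws, hws, rfl⟩ := hq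
      exact (M.eventually_visits_of_append_cycle hx₁
        ((hM _).1 (hL₁ (hA (append_cycle_mem_langA hws hx₁))))).mono fun _ h _ => h
    · exact Eventually.of_forall fun _ h => (hq h).elim
  obtain ⟨m, hm, hm₁⟩ := ((eventually_all.2 hvisit).and (eventually_ge_atTop 1)).exists
  have hne : (List.replicate m x₁).flatten ++ x₂ ≠ [] := by
    obtain ⟨k, rfl⟩ := Nat.exists_eq_add_of_le' hm₁
    simp [List.replicate_succ, hx₁]
  have hwL := (hM _).2 <| M.frequently_run_append_cycle_mem (x := x) hne fun n =>
    hm _ ⟨(List.replicate n (List.replicate m x₁ ++ [x₂])).flatten, by simp; tauto,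
      by simp [List.flatten_flatten]⟩
  exact hL₂.subset ⟨hwL, hB (append_cycle_mem_langB m hne)⟩

end Inseparable

namespace DetAuto

variable {α : Type} (M : DetAuto α) (C₁ C₂ : M.Q → ℕ)

/-- The pattern at the level of the automaton: it yields `x₁ = u` and `x₂ = u ++ v`. -/
def BadLoop : Prop :=
  ∃ (x u v : List α) (q : M.Q), M.evalFrom M.init x = q ∧ M.evalFrom q u = q ∧
    M.evalFrom q v = q ∧ Odd (M.maxColor C₁ q u) ∧ Odd (M.maxColor C₂ q (u ++ v))

variable {M C₁ C₂}

lemma BadLoop.exists_langA_langB (h : M.BadLoop C₁ C₂) :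
    ∃ x x₁ x₂ : List α, x₁ ≠ [] ∧ x₂ ≠ [] ∧
      LangA x x₁ x₂ ⊆ {w | ParityAccept M C₁ w} ∧ LangB x x₁ x₂ ⊆ {w | ParityAccept M C₂ w} := by
  obtain ⟨x, u, v, q, hq, hu, hv, hodd₁, hodd₂⟩ := h
  have hune : u ≠ [] := by
    rintro rfl
    exact Nat.not_odd_zero hodd₁
  have huv : M.evalFrom q (u ++ v) = q := by rw [evalFrom_append, hu, hv]
  exact ⟨x, u, u ++ v, hune, by simp [hune],
    fun w hw => parityAccept_of_mem_langA hq hu huv hodd₁ hw,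
    fun w hw => parityAccept_of_mem_langB hq hu huv (maxColor_append ▸ le_max_left _ _) hodd₂ hw⟩

variable (M C₁ C₂)

def HasOddLoop (q : M.Q) (m : ℕ) : Prop :=
  ∃ z, M.evalFrom q z = q ∧ Odd (M.maxColor C₁ q z) ∧ M.maxColor C₂ q z ≤ m

def colorFin (q : M.Q) : Fin (Finset.univ.sup C₂ + 1) :=
  ⟨C₂ q, Nat.lt_succ_of_le (Finset.le_sup (Finset.mem_univ q))⟩

/-- The second component is the largest `C₂`-color read since the last state `(q, m)` with
`HasOddLoop q m`; these are the accepting states of the separator. -/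
noncomputable def separator : DetAuto α where
  Q := M.Q × Fin (Finset.univ.sup C₂ + 1)
  init := (M.init, colorFin M C₂ M.init)
  δ s a := (M.δ s.1 a, open Classical in
    if M.HasOddLoop C₁ C₂ s.1 s.2 then colorFin M C₂ (M.δ s.1 a)
    else max s.2 (colorFin M C₂ (M.δ s.1 a)))

noncomputable def runMax (w : ℕ → α) (n : ℕ) : ℕ := ((M.separator C₁ C₂).run w n).2

variable {M C₁ C₂} {w : ℕ → α}

@[simp] lemma separator_run_fst (n : ℕ) : ((M.separator C₁ C₂).run w n).1 = M.run w n := by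
  induction n with
  | zero => rfl
  | succ n ih => exact congrArg (M.δ · (w n)) ih

open Classical in
lemma separator_δ_snd (s : (M.separator C₁ C₂).Q) (a : α) :
    ((M.separator C₁ C₂).δ s a).2 = if M.HasOddLoop C₁ C₂ s.1 s.2 then colorFin M C₂ (M.δ s.1 a)
      else max s.2 (colorFin M C₂ (M.δ s.1 a)) := rfl

lemma runMax_succ_of_hasOddLoop {n : ℕ}
    (h : M.HasOddLoop C₁ C₂ (M.run w n) (M.runMax C₁ C₂ w n)) :
    M.runMax C₁ C₂ w (n + 1) = C₂ (M.run w (n + 1)) := by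
  show ((M.separator C₁ C₂).δ ((M.separator C₁ C₂).run w n) (w n)).2.val = _
  rw [separator_δ_snd, separator_run_fst]
  exact congrArg Fin.val (if_pos h)

lemma runMax_succ_of_not_hasOddLoop {n : ℕ}
    (h : ¬ M.HasOddLoop C₁ C₂ (M.run w n) (M.runMax C₁ C₂ w n)) :
    M.runMax C₁ C₂ w (n + 1) = max (M.runMax C₁ C₂ w n) (C₂ (M.run w (n + 1))) := by
  show ((M.separator C₁ C₂).δ ((M.separator C₁ C₂).run w n) (w n)).2.val = _
  rw [separator_δ_snd, separator_run_fst]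
  exact congrArg Fin.val (if_neg h)

lemma color_le_runMax_succ (n : ℕ) : C₂ (M.run w (n + 1)) ≤ M.runMax C₁ C₂ w (n + 1) := by
  by_cases h : M.HasOddLoop C₁ C₂ (M.run w n) (M.runMax C₁ C₂ w n)
  · exact (runMax_succ_of_hasOddLoop h).ge
  · exact (runMax_succ_of_not_hasOddLoop h).ge.trans' (le_max_right _ _)

lemma runMax_succ_le (n : ℕ) :
    M.runMax C₁ C₂ w (n + 1) ≤ max (M.runMax C₁ C₂ w n) (C₂ (M.run w (n + 1))) := by
  by_cases h : M.HasOddLoop C₁ C₂ (M.run w n) (M.runMax C₁ C₂ w n)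
  · exact (runMax_succ_of_hasOddLoop h).le.trans (le_max_right _ _)
  · exact (runMax_succ_of_not_hasOddLoop h).le

lemma runMax_mono {a b : ℕ} (hab : a ≤ b)
    (h : ∀ n, a ≤ n → n < b → ¬ M.HasOddLoop C₁ C₂ (M.run w n) (M.runMax C₁ C₂ w n)) :
    M.runMax C₁ C₂ w a ≤ M.runMax C₁ C₂ w b := by
  induction b, hab using Nat.le_induction with
  | base => exact le_rfl
  | succ b hab ih =>
    rw [runMax_succ_of_not_hasOddLoop (h b hab (Nat.lt_succ_self b))]
    exact (ih fun n han hnb => h n han (Nat.lt_succ_of_lt hnb)).trans (le_max_left _ _)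

lemma runMax_le_of_hasOddLoop {t₀ d : ℕ} (h : M.HasOddLoop C₁ C₂ (M.run w t₀) (M.runMax C₁ C₂ w t₀))
    (hle : ∀ n, t₀ < n → C₂ (M.run w n) ≤ d) {n : ℕ} (hn : t₀ < n) : M.runMax C₁ C₂ w n ≤ d := by
  induction n, hn using Nat.le_induction with
  | base => exact (runMax_succ_of_hasOddLoop h).le.trans (hle _ (Nat.lt_succ_self t₀))
  | succ n hn ih => exact (runMax_succ_le n).trans (max_le ih (hle _ (by omega)))

/-- If the separator accepted only finitely often, then between two late visits of a state `q`
of color `d` the run would read a loop at `q` witnessing `HasOddLoop` at the second visit. -/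
lemma frequently_hasOddLoop (hw : ParityAccept M C₁ w) :
    ∃ᶠ n in atTop, M.HasOddLoop C₁ C₂ (M.run w n) (M.runMax C₁ C₂ w n) := by
  obtain ⟨d, hd, hfreq, hle⟩ := parityAccept_iff.1 hw
  by_contra hnot
  obtain ⟨N, hN⟩ := eventually_atTop.1 (hle.and (not_frequently.1 hnot))
  obtain ⟨q, hq⟩ : ∃ q, ∃ᶠ n in atTop, (C₁ (M.run w n) = d ∧ N ≤ n) ∧ M.run w n = q :=
    frequently_exists.1 <| (hfreq.and_eventually (eventually_ge_atTop N)).mono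
      fun n hn => ⟨M.run w n, hn, rfl⟩
  obtain ⟨a, -, ⟨-, haN⟩, hqa⟩ := frequently_atTop.1 hq 0
  obtain ⟨b, hab, ⟨hdb, -⟩, hqb⟩ := frequently_atTop.1 hq (a + 1)
  obtain ⟨z, hz, hvis⟩ := exists_loop_of_run_eq (M := M) (w := w) (by omega : a ≤ b)
    (hqa.trans hqb.symm)
  rw [hqa] at hz hvis
  have hz₁ : M.maxColor C₁ q z = d := maxColor_eq
    (fun s hs => by
      obtain ⟨t, hat, -, rfl⟩ := (hvis s).1 hs
      exact (hN t (by omega)).1)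
    ⟨_, (hvis _).2 ⟨b, by omega, le_rfl, hqb⟩, hqb ▸ hdb⟩
  have hz₂ : M.maxColor C₂ q z ≤ M.runMax C₁ C₂ w b := maxColor_le_iff.2 fun s hs => by
    obtain ⟨t, hat, htb, rfl⟩ := (hvis s).1 hs
    obtain ⟨t, rfl⟩ := Nat.exists_eq_add_one_of_ne_zero (by omega : t ≠ 0)
    exact (color_le_runMax_succ t).trans
      (runMax_mono htb fun n hn _ => (hN n (by omega)).2)
  exact (hN b (by omega)).2 (hqb ▸ ⟨z, hz, hz₁ ▸ hd, hz₂⟩)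

/-- Once the `C₂`-colors stay `≤ d` and the separator has accepted, the recorded maximum stays
`≤ d`; an odd loop at a later accepting `q`, followed by a loop at `q` through color `d`, is then a
bad loop. -/
lemma badLoop_of_frequently_hasOddLoop (hw : ParityAccept M C₂ w)
    (hflag : ∃ᶠ n in atTop, M.HasOddLoop C₁ C₂ (M.run w n) (M.runMax C₁ C₂ w n)) :
    M.BadLoop C₁ C₂ := by
  obtain ⟨d, hd, hfreq, hle⟩ := parityAccept_iff.1 hw
  obtain ⟨N, hN⟩ := eventually_atTop.1 hle
  obtain ⟨t₀, ht₀, hflag₀⟩ := frequently_atTop.1 hflag N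
  have hmax : ∀ n, t₀ < n → M.runMax C₁ C₂ w n ≤ d := fun n hn =>
    runMax_le_of_hasOddLoop hflag₀ (fun n hn => hN n (by omega)) hn
  obtain ⟨q, hq⟩ : ∃ q, ∃ᶠ n in atTop,
      (M.HasOddLoop C₁ C₂ (M.run w n) (M.runMax C₁ C₂ w n) ∧ t₀ < n) ∧ M.run w n = q :=
    frequently_exists.1 <| (hflag.and_eventually (eventually_gt_atTop t₀)).mono
      fun n hn => ⟨M.run w n, hn, rfl⟩
  obtain ⟨a, -, ⟨⟨z, hz, hz₁, hz₂⟩, hat₀⟩, hqa⟩ := frequently_atTop.1 hq 0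
  obtain ⟨s, hs, hds⟩ := frequently_atTop.1 hfreq (a + 1)
  obtain ⟨b, hsb, -, hqb⟩ := frequently_atTop.1 hq s
  obtain ⟨v, hv, hvis⟩ := exists_loop_of_run_eq (M := M) (w := w) (by omega : a ≤ b)
    (hqa.trans hqb.symm)
  rw [hqa] at hz hz₁ hz₂ hv hvis
  have hv₂ : M.maxColor C₂ q v = d := maxColor_eq
    (fun s hs => by
      obtain ⟨t, hat, -, rfl⟩ := (hvis s).1 hs
      exact hN t (by omega))
    ⟨_, (hvis _).2 ⟨s, by omega, by omega, rfl⟩, hds⟩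
  refine ⟨(List.range a).map w, z, v, q, (run_eq_evalFrom w a).symm.trans hqa, hz, hv, hz₁, ?_⟩
  rw [maxColor_append, hz, hv₂, max_eq_right (hz₂.trans (hmax a hat₀))]
  exact hd

theorem dbwSeparable_of_not_badLoop (h : ¬ M.BadLoop C₁ C₂) :
    DBWSeparable {w | ParityAccept M C₁ w} {w | ParityAccept M C₂ w} :=
  ⟨{w | ∃ᶠ n in atTop, M.HasOddLoop C₁ C₂ (M.run w n) (M.runMax C₁ C₂ w n)},
    ⟨M.separator C₁ C₂, {s | M.HasOddLoop C₁ C₂ s.1 s.2}, fun w => by simp [runMax]⟩,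
    fun _ hw => frequently_hasOddLoop hw,
    Set.eq_empty_iff_forall_notMem.2 fun _ ⟨h₁, h₂⟩ => h (badLoop_of_frequently_hasOddLoop h₂ h₁)⟩

def prod (M₁ M₂ : DetAuto α) : DetAuto α where
  Q := M₁.Q × M₂.Q
  init := (M₁.init, M₂.init)
  δ p a := (M₁.δ p.1 a, M₂.δ p.2 a)

@[simp] lemma run_prod (M₁ M₂ : DetAuto α) (n : ℕ) :
    (M₁.prod M₂).run w n = (M₁.run w n, M₂.run w n) := by
  induction n with
  | zero => rfl
  | succ n ih => exact congrArg (fun p => (M₁.prod M₂).δ p (w n)) ih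

end DetAuto

lemma OmegaRegular.exists_common_automaton {α : Type} {L₁ L₂ : Set (ℕ → α)}
    (h₁ : OmegaRegular L₁) (h₂ : OmegaRegular L₂) :
    ∃ (M : DetAuto α) (C₁ C₂ : M.Q → ℕ),
      L₁ = {w | ParityAccept M C₁ w} ∧ L₂ = {w | ParityAccept M C₂ w} := by
  obtain ⟨M₁, c₁, hM₁⟩ := h₁
  obtain ⟨M₂, c₂, hM₂⟩ := h₂
  exact ⟨M₁.prod M₂, fun p => c₁ p.1, fun p => c₂ p.2,
    Set.ext fun w => by simp [hM₁, ParityAccept], Set.ext fun w => by simp [hM₂, ParityAccept]⟩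

theorem stmt_11_general {Sig : Type} (L₁ L₂ : Set (ℕ → Sig))
    (h₁ : OmegaRegular L₁) (h₂ : OmegaRegular L₂) :
    ¬ DBWSeparable L₁ L₂ ↔
      ∃ x x₁ x₂ : List Sig, x₁ ≠ [] ∧ x₂ ≠ [] ∧
        LangA x x₁ x₂ ⊆ L₁ ∧ LangB x x₁ x₂ ⊆ L₂ := by
  obtain ⟨M, C₁, C₂, rfl, rfl⟩ := h₁.exists_common_automaton h₂
  constructor
  · intro hinsep
    by_contra hpattern
    exact hinsep (M.dbwSeparable_of_not_badLoop fun hbad => hpattern hbad.exists_langA_langB)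
  · rintro ⟨x, x₁, x₂, hx₁, -, hA, hB⟩
    exact not_dbwSeparable_of_langA_langB hx₁ hA hB

/-- Two ω-regular languages `L₁, L₂` are not DBW-separable iff there are finite words
`x ∈ Σ*`, `x₁, x₂ ∈ Σ⁺` with `x·(x₁+x₂)*·x₁^ω ⊆ L₁` and `x·(x₁*·x₂)^ω ⊆ L₂`. -/
theorem stmt_11 {Sig : Type} [Fintype Sig] (L₁ L₂ : Set (ℕ → Sig))
    (h₁ : OmegaRegular L₁) (h₂ : OmegaRegular L₂) :
    ¬ DBWSeparable L₁ L₂ ↔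
      ∃ x x₁ x₂ : List Sig, x₁ ≠ [] ∧ x₂ ≠ [] ∧
        LangA x x₁ x₂ ⊆ L₁ ∧ LangB x x₁ x₂ ⊆ L₂ :=
  stmt_11_general L₁ L₂ h₁ h₂
end

section
/- Let i ∈ {0,1} and i ≤ k. An ω-regular language L ⊆ Σ^ω is not DWW[i,k]-recognizable if and only if there exist finite words x̂_i, x̂_{i+1}, …, x̂_k ∈ Σ* and x_i, x_{i+1}, …, x_k ∈ Σ⁺ such that for every even ℓ with i ≤ ℓ ≤ k: x̂_i·x_i*·x̂_{i+1}·x_{i+1}*⋯x̂_ℓ·x_ℓ^ω ⊆ L, and for every odd ℓ with i ≤ ℓ ≤ k: x̂_i·x_i*·x̂_{i+1}·x_{i+1}*⋯x̂_ℓ·x_ℓ^ω ∩ L = ∅. -/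
/-- The ω-language `x̂_i·x_i*·x̂_{i+1}·x_{i+1}*⋯x̂_ℓ·x_ℓ^ω`. -/
def LangChain {α : Type} (xh xx : ℕ → List α) (i l : ℕ) : Set (ℕ → α) :=
  { w | ∃ e : ℕ → ℕ, ∀ m, HasPrefixWord w
      (((List.range (l - i)).map
          (fun j => xh (i + j) ++ (List.replicate (e (i + j)) (xx (i + j))).flatten)).flatten
        ++ xh l ++ (List.replicate m (xx l)).flatten) }

/-- `L` is recognizable by a weak DPW with colors in `{i, …, k}`: a DPW whose coloring is
monotonically nondecreasing along transitions. -/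
def DWWRecognizable' {α : Type} (i k : ℕ) (L : Set (ℕ → α)) : Prop :=
  ∃ (M : DetAuto α) (c : M.Q → ℕ), (∀ q, i ≤ c q ∧ c q ≤ k) ∧
    (∀ q σ, c q ≤ c (M.δ q σ)) ∧
    ∀ x, x ∈ L ↔ ParityAccept M c x

open Filter

theorem hasPrefixWord_iff_map_range_eq {α : Type} {w : ℕ → α} {u : List α} :
    HasPrefixWord w u ↔ (List.range u.length).map w = u := by
  constructor
  · intro h
    exact List.ext_getElem (by simp) fun n _ hn => by simpa using h ⟨n, hn⟩
  · intro h ⟨n, hn⟩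
    simp [← List.getElem_of_eq h (by simpa using hn)]

theorem hasPrefixWord_append_stream {α : Type} (u : List α) (s : Stream' α) :
    HasPrefixWord (u ++ₛ s) u :=
  fun ⟨n, hn⟩ => Stream'.get_append_left n u s hn

theorem exists_hasPrefixWord_append_pow {α : Type} (u x : List α) (hx : x ≠ []) :
    ∃ w : ℕ → α, ∀ m, HasPrefixWord w (u ++ (List.replicate m x).flatten) := by
  refine ⟨u ++ₛ Stream'.cycle x hx, fun m => ?_⟩
  have hcycle : Stream'.cycle x hx = (List.replicate m x).flatten ++ₛ Stream'.cycle x hx := by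
    induction m with
    | zero => rfl
    | succ m ih =>
      rw [List.replicate_succ', List.flatten_append, List.flatten_singleton,
        Stream'.append_append_stream, ← Stream'.cycle_eq, ← ih]
  rw [hcycle, ← Stream'.append_append_stream]
  exact hasPrefixWord_append_stream _ _

namespace DetAuto

variable {α : Type} (M : DetAuto α)

def runFrom (q : M.Q) (u : List α) : M.Q := u.foldl M.δ q

@[simp] theorem runFrom_nil (q : M.Q) : M.runFrom q [] = q := rfl

@[simp] theorem runFrom_append (q : M.Q) (u v : List α) :
    M.runFrom q (u ++ v) = M.runFrom (M.runFrom q u) v := List.foldl_append ..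

theorem runFrom_flatten_replicate (q : M.Q) (v : List α) (n : ℕ) :
    M.runFrom q (List.replicate n v).flatten = (M.runFrom · v)^[n] q := by
  induction n generalizing q with
  | zero => rfl
  | succ n ih =>
    rw [List.replicate_succ, List.flatten_cons, runFrom_append, ih, Function.iterate_succ_apply]

theorem run_eq_runFrom_map_range (x : ℕ → α) (n : ℕ) :
    M.run x n = M.runFrom M.init ((List.range n).map x) := by
  induction n with
  | zero => rfl
  | succ n ih => rw [List.range_succ, List.map_append, runFrom_append, ← ih]; rfl

theorem run_add_s16 (x : ℕ → α) (m n : ℕ) :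
    M.run x (m + n) = M.runFrom (M.run x m) ((List.range n).map fun j => x (m + j)) := by
  rw [run_eq_runFrom_map_range, run_eq_runFrom_map_range, List.range_add, List.map_append,
    List.map_map, runFrom_append]
  rfl

theorem run_eq_runFrom_take_of_hasPrefixWord {x : ℕ → α} {u : List α} (h : HasPrefixWord x u)
    {j : ℕ} (hj : j ≤ u.length) : M.run x j = M.runFrom M.init (u.take j) := by
  rw [run_eq_runFrom_map_range, ← hasPrefixWord_iff_map_range_eq.1 h, ← List.map_take,
    List.take_range, min_eq_left hj]

theorem le_runFrom_of_weak {c : M.Q → ℕ} (hweak : ∀ q σ, c q ≤ c (M.δ q σ)) (q : M.Q)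
    (u : List α) : c q ≤ c (M.runFrom q u) := by
  induction u generalizing q with
  | nil => exact le_rfl
  | cons σ u ih => exact (hweak q σ).trans (ih (M.δ q σ))

def Reach (q p : M.Q) : Prop := ∃ u, M.runFrom q u = p

variable {M} in
theorem Reach.refl (q : M.Q) : M.Reach q q := ⟨[], rfl⟩

variable {M} in
theorem Reach.trans {q p r : M.Q} (hqp : M.Reach q p) (hpr : M.Reach p r) : M.Reach q r := by
  obtain ⟨u, rfl⟩ := hqp
  obtain ⟨v, rfl⟩ := hpr
  exact ⟨u ++ v, runFrom_append ..⟩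

theorem reach_run (x : ℕ → α) (n : ℕ) : M.Reach M.init (M.run x n) :=
  ⟨_, (M.run_eq_runFrom_map_range x n).symm⟩

def IsLoop (q : M.Q) (v : List α) : Prop := v ≠ [] ∧ M.runFrom q v = q

section Parity

variable (c : M.Q → ℕ)

theorem parityAccept_iff_of_frequently_of_eventually_le {x : ℕ → α} {m : ℕ}
    (hfreq : ∃ᶠ n in atTop, c (M.run x n) = m) (hle : ∀ᶠ n in atTop, c (M.run x n) ≤ m) :
    ParityAccept M c x ↔ Odd m := by
  constructor
  · rintro ⟨m', hodd, hfreq', hmax⟩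
    obtain ⟨n, hn, hnm⟩ := (hfreq'.and_eventually hle).exists
    rwa [le_antisymm (hn ▸ hnm) (hmax m hfreq)] at hodd
  · refine fun hodd => ⟨m, hodd, hfreq, fun m' hm' => ?_⟩
    obtain ⟨n, hn, hnm⟩ := (hm'.and_eventually hle).exists
    exact hn ▸ hnm

theorem parityAccept_iff_of_weak (hweak : ∀ q σ, c q ≤ c (M.δ q σ)) {x : ℕ → α} {q : M.Q}
    (hq : ∃ᶠ n in atTop, M.run x n = q) : ParityAccept M c x ↔ Odd (c q) := by
  have hmono : Monotone fun n => c (M.run x n) := monotone_nat_of_le_succ fun n => hweak _ _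
  refine M.parityAccept_iff_of_frequently_of_eventually_le c (hq.mono fun n hn => by rw [hn])
    (Eventually.of_forall fun n => ?_)
  obtain ⟨m, hm, hnm⟩ := (hq.and_eventually (eventually_ge_atTop n)).exists
  exact hm ▸ hmono hnm

def loopSup (q : M.Q) (v : List α) : ℕ :=
  (Finset.range v.length).sup fun j => c (M.runFrom q (v.take j))

theorem loopSup_eq_of_forall_le {q : M.Q} {v : List α} (hv : v ≠ [])
    (h : ∀ j < v.length, c (M.runFrom q (v.take j)) ≤ c q) : M.loopSup c q v = c q := by
  refine le_antisymm (Finset.sup_le fun j hj => h j (Finset.mem_range.1 hj)) ?_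
  have := Finset.le_sup (f := fun j => c (M.runFrom q (v.take j)))
    (Finset.mem_range.2 (List.length_pos_iff.2 hv))
  simpa [loopSup] using this

theorem parityAccept_iff_loopSup {w : ℕ → α} {u v : List α} {q : M.Q}
    (hw : ∀ m, HasPrefixWord w (u ++ (List.replicate m v).flatten))
    (hu : M.runFrom M.init u = q) (hv : M.IsLoop q v) :
    ParityAccept M c w ↔ Odd (M.loopSup c q v) := by
  have hpos : 0 < v.length := List.length_pos_iff.2 hv.1
  have hrun : ∀ a, ∀ j < v.length,
      M.run w (u.length + a * v.length + j) = M.runFrom q (v.take j) := by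
    intro a j hj
    have hsplit : u ++ (List.replicate (a + 1) v).flatten
        = (u ++ (List.replicate a v).flatten) ++ v := by
      simp [List.replicate_succ']
    rw [M.run_eq_runFrom_take_of_hasPrefixWord (hw (a + 1)) (by simp; nlinarith), hsplit,
      show u.length + a * v.length + j = (u ++ (List.replicate a v).flatten).length + j by simp,
      List.take_length_add_append, runFrom_append, runFrom_append, hu,
      runFrom_flatten_replicate, Function.iterate_fixed hv.2]
  obtain ⟨j₀, hj₀, hsup⟩ := Finset.exists_mem_eq_sup (Finset.range v.length)
    ⟨0, Finset.mem_range.2 hpos⟩ fun j => c (M.runFrom q (v.take j))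
  refine M.parityAccept_iff_of_frequently_of_eventually_le c
    (frequently_atTop.2 fun a => ⟨u.length + a * v.length + j₀, by nlinarith, ?_⟩)
    ((eventually_ge_atTop u.length).mono fun t ht => ?_)
  · rw [hrun a j₀ (Finset.mem_range.1 hj₀), loopSup, hsup]
  · have ht : t = u.length + (t - u.length) / v.length * v.length + (t - u.length) % v.length := by
      have := Nat.div_add_mod' (t - u.length) v.length
      omega
    rw [ht, hrun _ _ (Nat.mod_lt _ hpos)]
    exact Finset.le_sup (f := fun j => c (M.runFrom q (v.take j)))
      (Finset.mem_range.2 (Nat.mod_lt _ hpos))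

/-- The loop is traced by the run between two visits to its recurrent state of largest colour. -/
theorem exists_recurrent_loop (x : ℕ → α) :
    ∃ q v, (∃ᶠ n in atTop, M.run x n = q) ∧ M.Reach M.init q ∧ M.IsLoop q v ∧
      (ParityAccept M c x ↔ Odd (M.loopSup c q v)) := by
  set R := {q | ∃ᶠ n in atTop, M.run x n = q}
  have hR : R.Nonempty := by
    obtain ⟨q, hq⟩ := Finite.exists_infinite_fiber (M.run x)
    exact ⟨q, Nat.frequently_atTop_iff_infinite.2 (Set.infinite_coe_iff.1 hq)⟩
  obtain ⟨q, hqR, hqmax⟩ := Set.exists_max_image R c R.toFinite hR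
  have hev : ∀ᶠ n in atTop, M.run x n ∈ R := by
    have : ∀ᶠ n in atTop, ∀ p ∉ R, M.run x n ≠ p := eventually_all.2 fun p => by
      by_cases hp : p ∈ R
      · exact Eventually.of_forall fun _ h => (h hp).elim
      · exact (not_frequently.1 hp).mono fun _ hn _ => hn
    exact this.mono fun n hn => by_contra fun h => hn _ h rfl
  obtain ⟨N, hN⟩ := eventually_atTop.1 hev
  obtain ⟨n₁, hn₁, hN₁⟩ := (hqR.and_eventually (eventually_ge_atTop N)).exists
  obtain ⟨n₂, hn₂, hn₁₂⟩ := (hqR.and_eventually (eventually_gt_atTop n₁)).exists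
  set v := (List.range (n₂ - n₁)).map fun j => x (n₁ + j)
  have hrun : ∀ j ≤ n₂ - n₁, M.runFrom q (v.take j) = M.run x (n₁ + j) := fun j hj => by
    rw [run_add_s16, hn₁, ← List.map_take, List.take_range, min_eq_left hj]
  have hv : M.IsLoop q v := by
    refine ⟨fun h => ?_, ?_⟩
    · have := congrArg List.length h
      simp [v] at this
      omega
    · rw [← List.take_length (l := v), hrun _ (by simp [v]), List.length_map, List.length_range,
        Nat.add_sub_cancel' hn₁₂.le, hn₂]
  refine ⟨q, v, hqR, hn₁ ▸ M.reach_run x n₁, hv, ?_⟩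
  rw [M.loopSup_eq_of_forall_le c hv.1 fun j hj => ?_]
  · exact M.parityAccept_iff_of_frequently_of_eventually_le c (hqR.mono fun n hn => by rw [hn])
      (hev.mono fun n hn => hqmax _ hn)
  · rw [hrun j (by simpa [v] using hj.le)]
    exact hqmax _ (hN _ (by omega))

end Parity

section Flower

variable (c : M.Q → ℕ)

def Flower (q : M.Q) (n k : ℕ) : Prop :=
  ∃ (s : ℕ → M.Q) (v : ℕ → List α), M.Reach q (s n) ∧ ∀ ℓ, n ≤ ℓ → ℓ ≤ k →
    M.IsLoop (s ℓ) (v ℓ) ∧ (Odd (M.loopSup c (s ℓ) (v ℓ)) ↔ Even ℓ) ∧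
      (ℓ < k → M.Reach (s ℓ) (s (ℓ + 1)))

variable {M c}

theorem flower_of_lt (q : M.Q) {n k : ℕ} (h : k < n) : M.Flower c q n k :=
  ⟨fun _ => q, fun _ => [], Reach.refl q, fun _ h₁ h₂ => absurd (h₁.trans h₂) h.not_ge⟩

theorem le_of_not_flower {q : M.Q} {n k : ℕ} (h : ¬ M.Flower c q n k) : n ≤ k :=
  le_of_not_gt fun hk => h (flower_of_lt q hk)

theorem Flower.mono {q p : M.Q} {n k : ℕ} (hqp : M.Reach q p) (hf : M.Flower c p n k) :
    M.Flower c q n k := by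
  obtain ⟨s, v, hs, h⟩ := hf
  exact ⟨s, v, hqp.trans hs, h⟩

theorem Flower.cons {q p : M.Q} {v : List α} {n k : ℕ} (hqp : M.Reach q p) (hv : M.IsLoop p v)
    (hacc : Odd (M.loopSup c p v) ↔ Even n) (hf : M.Flower c p (n + 1) k) :
    M.Flower c q n k := by
  obtain ⟨s, vs, hs, h⟩ := hf
  refine ⟨Function.update s n p, Function.update vs n v, by simpa using hqp, fun ℓ h₁ h₂ => ?_⟩
  rcases h₁.eq_or_lt with rfl | h₁
  · simpa [hv, hacc] using fun _ => hs
  · simpa [h₁.ne', (h₁.trans (Nat.lt_succ_self ℓ)).ne'] using h ℓ h₁ h₂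

variable (M c)

noncomputable def flowerColoring (i k : ℕ) (q : M.Q) : ℕ :=
  sInf {n | i ≤ n ∧ M.Flower c q (n + 1) k}

variable {M c} {i k : ℕ}

theorem flowerColoring_spec (hik : i ≤ k) (q : M.Q) :
    i ≤ M.flowerColoring c i k q ∧ M.Flower c q (M.flowerColoring c i k q + 1) k :=
  Nat.sInf_mem (s := {n | i ≤ n ∧ M.Flower c q (n + 1) k})
    ⟨k, hik, flower_of_lt q (Nat.lt_succ_self k)⟩

theorem flowerColoring_le (hik : i ≤ k) (q : M.Q) : M.flowerColoring c i k q ≤ k :=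
  Nat.sInf_le ⟨hik, flower_of_lt q (Nat.lt_succ_self k)⟩

theorem flowerColoring_mono (hik : i ≤ k) {q p : M.Q} (hqp : M.Reach q p) :
    M.flowerColoring c i k q ≤ M.flowerColoring c i k p :=
  Nat.sInf_le ⟨(flowerColoring_spec hik p).1, (flowerColoring_spec hik p).2.mono hqp⟩

theorem not_flower_flowerColoring (hnf : ¬ M.Flower c M.init i k) {q : M.Q}
    (hq : M.Reach M.init q) : ¬ M.Flower c q (M.flowerColoring c i k q) k := by
  intro hf
  rcases (flowerColoring_spec (le_of_not_flower hnf) q).1.eq_or_lt with h | h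
  · exact hnf (h ▸ hf.mono hq)
  · have hlt : M.flowerColoring c i k q - 1 < M.flowerColoring c i k q := Nat.sub_one_lt_of_lt h
    exact Nat.notMem_of_lt_sInf hlt
      ⟨Nat.le_sub_one_of_lt h, by rwa [Nat.sub_add_cancel (Nat.one_le_of_lt h)]⟩

theorem odd_flowerColoring_iff (hnf : ¬ M.Flower c M.init i k) {q : M.Q} {v : List α}
    (hq : M.Reach M.init q) (hv : M.IsLoop q v) :
    Odd (M.flowerColoring c i k q) ↔ Odd (M.loopSup c q v) := by
  by_contra h
  refine not_flower_flowerColoring hnf hq (Flower.cons (Reach.refl q) hv ?_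
    (flowerColoring_spec (le_of_not_flower hnf) q).2)
  rw [← Nat.not_odd_iff_even]
  tauto

theorem dwwRecognizable_of_not_flower {L : Set (ℕ → α)}
    (hL : ∀ x, x ∈ L ↔ ParityAccept M c x) (hnf : ¬ M.Flower c M.init i k) :
    DWWRecognizable' i k L := by
  have hik := le_of_not_flower hnf
  have hweak : ∀ q σ, M.flowerColoring c i k q ≤ M.flowerColoring c i k (M.δ q σ) :=
    fun q σ => flowerColoring_mono hik ⟨[σ], rfl⟩
  refine ⟨M, M.flowerColoring c i k,
    fun q => ⟨(flowerColoring_spec hik q).1, flowerColoring_le hik q⟩, hweak, fun x => ?_⟩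
  obtain ⟨q, v, hfreq, hq, hv, hacc⟩ := M.exists_recurrent_loop c x
  rw [hL, hacc, ← odd_flowerColoring_iff hnf hq hv, M.parityAccept_iff_of_weak _ hweak hfreq]

end Flower

end DetAuto

section Chain

variable {α : Type} (xh xx : ℕ → List α) (e : ℕ → ℕ) (i : ℕ)

/-- The word `x̂_i x_i^{e i} ⋯ x̂_{ℓ-1} x_{ℓ-1}^{e (ℓ-1)}` preceding `x̂_ℓ x_ℓ^ω` in
`LangChain xh xx i ℓ`. -/
def chainStem (ℓ : ℕ) : List α :=
  ((List.range (ℓ - i)).map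
    fun j => xh (i + j) ++ (List.replicate (e (i + j)) (xx (i + j))).flatten).flatten

@[simp] theorem chainStem_self : chainStem xh xx e i i = [] := by
  simp [chainStem]

theorem chainStem_succ {ℓ : ℕ} (h : i ≤ ℓ) :
    chainStem xh xx e i (ℓ + 1)
      = chainStem xh xx e i ℓ ++ (xh ℓ ++ (List.replicate (e ℓ) (xx ℓ)).flatten) := by
  simp [chainStem, Nat.sub_add_comm h, List.range_succ, Nat.add_sub_cancel' h]

theorem chainStem_congr {e e' : ℕ → ℕ} {ℓ : ℕ} (h : ∀ j < ℓ, e j = e' j) :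
    chainStem xh xx e i ℓ = chainStem xh xx e' i ℓ := by
  refine congrArg List.flatten (List.map_congr_left fun j hj => ?_)
  rw [h (i + j) (by simp at hj; omega)]

end Chain

namespace DetAuto

variable {α : Type} {M : DetAuto α} {c : M.Q → ℕ}

theorem exists_chain_of_flower {i k : ℕ} {L : Set (ℕ → α)}
    (hL : ∀ x, x ∈ L ↔ ParityAccept M c x) (hf : M.Flower c M.init i k) :
    ∃ (xh xx : ℕ → List α),
      (∀ ℓ, i ≤ ℓ → ℓ ≤ k → xx ℓ ≠ []) ∧
      (∀ ℓ, i ≤ ℓ → ℓ ≤ k → Even ℓ → LangChain xh xx i ℓ ⊆ L) ∧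
      (∀ ℓ, i ≤ ℓ → ℓ ≤ k → Odd ℓ → LangChain xh xx i ℓ ∩ L = ∅) := by
  obtain ⟨s, v, hreach, hs⟩ := hf
  have hword : ∀ ℓ, ∃ u, i ≤ ℓ → ℓ ≤ k →
      M.runFrom (if ℓ = i then M.init else s (ℓ - 1)) u = s ℓ := by
    intro ℓ
    by_cases hℓ : i ≤ ℓ ∧ ℓ ≤ k
    · rcases hℓ.1.eq_or_lt with rfl | hlt
      · obtain ⟨u, hu⟩ := hreach
        exact ⟨u, fun _ _ => by simpa using hu⟩
      · obtain ⟨u, hu⟩ := (hs (ℓ - 1) (by omega) (by omega)).2.2 (by omega)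
        exact ⟨u, fun _ _ => by simpa [hlt.ne', Nat.sub_add_cancel (Nat.one_le_of_lt hlt)] using hu⟩
    · exact ⟨[], fun h₁ h₂ => (hℓ ⟨h₁, h₂⟩).elim⟩
  choose xh hxh using hword
  have hstem : ∀ e ℓ, i ≤ ℓ → ℓ ≤ k →
      M.runFrom M.init (chainStem xh v e i ℓ ++ xh ℓ) = s ℓ := by
    intro e ℓ hiℓ
    induction ℓ, hiℓ using Nat.le_induction with
    | base => exact fun hik => by simpa using hxh i le_rfl hik
    | succ ℓ hiℓ ih =>
      intro hℓ
      have hloop := (hs ℓ hiℓ (by omega)).1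
      rw [chainStem_succ _ _ _ _ hiℓ, ← List.append_assoc, runFrom_append, runFrom_append,
        ih (by omega), runFrom_flatten_replicate, Function.iterate_fixed hloop.2]
      simpa [(Nat.lt_succ_of_le hiℓ).ne'] using hxh (ℓ + 1) (by omega) hℓ
  have hmem : ∀ ℓ, i ≤ ℓ → ℓ ≤ k → ∀ w ∈ LangChain xh v i ℓ, w ∈ L ↔ Even ℓ := by
    intro ℓ h₁ h₂ w hw
    obtain ⟨e, he⟩ := hw
    obtain ⟨hloop, hacc, -⟩ := hs ℓ h₁ h₂
    rw [hL, M.parityAccept_iff_loopSup c he (hstem e ℓ h₁ h₂) hloop, hacc]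
  refine ⟨xh, v, fun ℓ h₁ h₂ => (hs ℓ h₁ h₂).1.1, fun ℓ h₁ h₂ hℓ w hw => (hmem ℓ h₁ h₂ w hw).2 hℓ,
    fun ℓ h₁ h₂ hℓ => Set.eq_empty_of_forall_notMem fun w ⟨hw, hwL⟩ => ?_⟩
  exact Nat.not_even_iff_odd.2 hℓ ((hmem ℓ h₁ h₂ w hw).1 hwL)

theorem exists_pumped_state_of_weak (hweak : ∀ q σ, c q ≤ c (M.δ q σ)) (u x : List α)
    (hx : x ≠ []) :
    ∃ a q, M.runFrom M.init (u ++ (List.replicate a x).flatten) = q ∧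
      c (M.runFrom M.init u) ≤ c q ∧
      ∀ w, (∀ m, HasPrefixWord w (u ++ (List.replicate m x).flatten)) →
        (ParityAccept M c w ↔ Odd (c q)) := by
  set g : M.Q → M.Q := (M.runFrom · x)
  have hpow : ∀ n, M.runFrom M.init (u ++ (List.replicate n x).flatten)
      = g^[n] (M.runFrom M.init u) := fun n => by
    rw [runFrom_append, runFrom_flatten_replicate]
  obtain ⟨a, b, hab, heq⟩ := Finite.exists_ne_map_eq_of_infinite fun n => g^[n] (M.runFrom M.init u)
  wlog hlt : a < b generalizing a b
  · exact this b a hab.symm heq.symm (by omega)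
  have hper : Function.IsPeriodicPt g (b - a) (g^[a] (M.runFrom M.init u)) := by
    rw [Function.IsPeriodicPt, Function.IsFixedPt, ← Function.iterate_add_apply,
      Nat.sub_add_cancel hlt.le, heq]
  refine ⟨a, _, hpow a, ?_, fun w hw => M.parityAccept_iff_of_weak c hweak ?_⟩
  · rw [← hpow a, runFrom_append]
    exact M.le_runFrom_of_weak hweak _ _
  refine frequently_atTop.2 fun n => ⟨(u ++ (List.replicate (n * (b - a) + a) x).flatten).length,
    ?_, ?_⟩
  · have hn : n ≤ n * ((b - a) * x.length) :=
      Nat.le_mul_of_pos_right n (Nat.mul_pos (by omega) (List.length_pos_iff.2 hx))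
    simp only [List.length_append, List.length_flatten, List.map_replicate, List.sum_replicate,
      smul_eq_mul]
    nlinarith
  · rw [M.run_eq_runFrom_take_of_hasPrefixWord (hw _) le_rfl, List.take_length, hpow,
      Function.iterate_add_apply, (hper.const_mul n).eq]

theorem exists_chainStem_succ_of_weak (hweak : ∀ q σ, c q ≤ c (M.δ q σ))
    {xh xx : ℕ → List α} {i ℓ : ℕ} (hiℓ : i ≤ ℓ) (hx : xx ℓ ≠ [])
    (hmem : ∀ w ∈ LangChain xh xx i ℓ, ParityAccept M c w ↔ Even ℓ) {e : ℕ → ℕ}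
    (he : ℓ ≤ c (M.runFrom M.init (chainStem xh xx e i ℓ))) :
    ∃ e', ℓ + 1 ≤ c (M.runFrom M.init (chainStem xh xx e' i (ℓ + 1))) := by
  obtain ⟨a, q, hq, hle, hacc⟩ :=
    M.exists_pumped_state_of_weak hweak (chainStem xh xx e i ℓ ++ xh ℓ) (xx ℓ) hx
  obtain ⟨w, hw⟩ := exists_hasPrefixWord_append_pow _ _ hx
  have hpar : Odd (c q) ↔ Even ℓ := (hacc w hw).symm.trans (hmem w ⟨e, hw⟩)
  have hℓq : ℓ ≤ c q := by
    refine he.trans (le_trans ?_ hle)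
    rw [runFrom_append]
    exact M.le_runFrom_of_weak hweak _ _
  refine ⟨Function.update e ℓ a, ?_⟩
  rw [chainStem_succ _ _ _ _ hiℓ, chainStem_congr _ _ _ (e' := e)
    fun j hj => Function.update_of_ne hj.ne _ _, Function.update_self, ← List.append_assoc, hq]
  refine (hℓq.eq_or_lt.resolve_left fun h => ?_)
  rw [← h, ← Nat.not_even_iff_odd] at hpar
  exact iff_not_self hpar.symm

end DetAuto

theorem not_dwwRecognizable_of_chain {α : Type} {i k : ℕ} {L : Set (ℕ → α)}
    (xh xx : ℕ → List α) (hne : ∀ ℓ, i ≤ ℓ → ℓ ≤ k → xx ℓ ≠ [])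
    (heven : ∀ ℓ, i ≤ ℓ → ℓ ≤ k → Even ℓ → LangChain xh xx i ℓ ⊆ L)
    (hodd : ∀ ℓ, i ≤ ℓ → ℓ ≤ k → Odd ℓ → LangChain xh xx i ℓ ∩ L = ∅) :
    ¬ DWWRecognizable' i k L := by
  rintro ⟨M, c, hbnd, hweak, hL⟩
  have hmem : ∀ ℓ, i ≤ ℓ → ℓ ≤ k → ∀ w ∈ LangChain xh xx i ℓ, ParityAccept M c w ↔ Even ℓ := by
    intro ℓ h₁ h₂ w hw
    rw [← hL]
    rcases Nat.even_or_odd ℓ with h | h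
    · exact iff_of_true (heven ℓ h₁ h₂ h hw) h
    · exact iff_of_false (fun hwL => (hodd ℓ h₁ h₂ h).subset ⟨hw, hwL⟩) (Nat.not_even_iff_odd.2 h)
  have hclimb : ∀ ℓ, i ≤ ℓ → ℓ ≤ k + 1 →
      ∃ e, ℓ ≤ c (M.runFrom M.init (chainStem xh xx e i ℓ)) := by
    intro ℓ hiℓ
    induction ℓ, hiℓ using Nat.le_induction with
    | base => exact fun _ => ⟨0, by simpa using (hbnd M.init).1⟩
    | succ ℓ hiℓ ih =>
      intro hℓ
      obtain ⟨e, he⟩ := ih (by omega)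
      exact DetAuto.exists_chainStem_succ_of_weak hweak hiℓ (hne ℓ hiℓ (by omega))
        (hmem ℓ hiℓ (by omega)) he
  rcases le_or_gt i k with hik | hki
  · obtain ⟨e, he⟩ := hclimb (k + 1) (by omega) le_rfl
    have := (hbnd (M.runFrom M.init (chainStem xh xx e i (k + 1)))).2
    omega
  · obtain ⟨h₁, h₂⟩ := hbnd M.init
    omega

theorem stmt_16_general {Sig : Type} (i k : ℕ) (L : Set (ℕ → Sig)) (hL : OmegaRegular L) :
    ¬ DWWRecognizable' i k L ↔
      ∃ (xh xx : ℕ → List Sig),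
        (∀ ℓ, i ≤ ℓ → ℓ ≤ k → xx ℓ ≠ []) ∧
        (∀ ℓ, i ≤ ℓ → ℓ ≤ k → Even ℓ → LangChain xh xx i ℓ ⊆ L) ∧
        (∀ ℓ, i ≤ ℓ → ℓ ≤ k → Odd ℓ → LangChain xh xx i ℓ ∩ L = ∅) := by
  obtain ⟨A, cc, hA⟩ := hL
  constructor
  · intro hnd
    exact DetAuto.exists_chain_of_flower hA
      (not_not.1 fun hnf => hnd (DetAuto.dwwRecognizable_of_not_flower hA hnf))
  · rintro ⟨xh, xx, hne, heven, hodd⟩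
    exact not_dwwRecognizable_of_chain xh xx hne heven hodd

/-- An ω-regular `L` is not DWW[i,k]-recognizable iff there are `x̂_i, …, x̂_k ∈ Σ*` and
`x_i, …, x_k ∈ Σ⁺` such that for even `ℓ` (with `i ≤ ℓ ≤ k`) the language
`x̂_i·x_i*·x̂_{i+1}·x_{i+1}*⋯x̂_ℓ·x_ℓ^ω` is contained in `L`, and for odd `ℓ` it is
disjoint from `L`. -/
theorem stmt_16 {Sig : Type} [Fintype Sig] (i k : ℕ) (hi : i = 0 ∨ i = 1) (hik : i ≤ k)
    (L : Set (ℕ → Sig)) (hL : OmegaRegular L) :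
    ¬ DWWRecognizable' i k L ↔
      ∃ (xh xx : ℕ → List Sig),
        (∀ ℓ, i ≤ ℓ → ℓ ≤ k → xx ℓ ≠ []) ∧
        (∀ ℓ, i ≤ ℓ → ℓ ≤ k → Even ℓ → LangChain xh xx i ℓ ⊆ L) ∧
        (∀ ℓ, i ≤ ℓ → ℓ ≤ k → Odd ℓ → LangChain xh xx i ℓ ∩ L = ∅) :=
  stmt_16_general i k L hL
end
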